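/- arXiv:cs/0701079 — 4 statements merged into one kernel-verified Lean document; each statement's English description precedes it below -/
import Mathlib

section
/- There exists a constant C > 0 such that for all integers n ≥ 2 and all weights k with 0 < k < n: | −ln P_KT(w) − [ n·F(w) + (1/2)·ln n + (1/2)·ln(π/2) + 1/(12n) + 1/(24k) + 1/(24(n−k)) ] | ≤ C·( 1/k³ + 1/(n−k)³ ), where w is any binary word of length n and weight k. -/
open Finset Real

noncomputable section

/-- Weight (number of 1-bits) of a binary word. -/
def bwt {n : ℕ} (w : Fin n → Bool) : ℕ := (Finset.univ.filter fun i => w i = true).card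

/-- KT-estimated probability of a word of length `n` and weight `k`. -/
def PKT (n k : ℕ) : ℝ :=
  Real.Gamma ((k : ℝ) + 1/2) * Real.Gamma ((n : ℝ) - (k : ℝ) + 1/2) /
    (Real.pi * Real.Gamma ((n : ℝ) + 1))

/-- KT-estimated probability of a binary word. -/
def PKTw {n : ℕ} (w : Fin n → Bool) : ℝ := PKT n (bwt w)

/-- Empirical entropy of a binary word (the convention `0 * log 0 = 0` holds
automatically since `Real.log 0 = 0`). -/
def Femp {n : ℕ} (w : Fin n → Bool) : ℝ :=
  -((bwt w : ℝ) / n) * Real.log ((bwt w : ℝ) / n)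
    - (((n : ℝ) - bwt w) / n) * Real.log (((n : ℝ) - bwt w) / n)

open Filter Topology
open scoped Nat

/-!
Write `R j = log j! - ((j + 1/2) log j - j + (1/2) log 2π + 1/(12 j))` for the remainder in
Stirling's formula. Legendre's duplication formula gives `Γ(k + 1/2) k! = (2k)! 4^(-k) √π`, so
`-log P_KT` is a signed sum of `log (k+m)!, log k!, log m!, log (2k)!, log (2m)!`; inserting
Stirling's formula for each of them produces the claimed expansion exactly, with error
`R(k+m) + R k + R m - R(2k) - R(2m)`. Finally `|R j| ≤ 8 / j³`: the fourth-order Taylor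
expansion of `log (1 + 1/j)` shows `R j - R (j+1) = O(j⁻⁴)`, and telescoping against
`R N → 0` (Stirling's theorem) sums these increments.
-/

def stirlingRemainder (j : ℕ) : ℝ :=
  log j ! - ((j + 1 / 2) * log j - j + log (2 * π) / 2 + 1 / (12 * j))

lemma abs_log_one_add_sub_taylor_le {y : ℝ} (hy : |y| ≤ 1 / 2) :
    |log (1 + y) - (y - y ^ 2 / 2 + y ^ 3 / 3 - y ^ 4 / 4)| ≤ 2 * |y| ^ 5 := by
  have h := abs_log_sub_add_sum_range_le (x := -y) (by rw [abs_neg]; linarith) 4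
  rw [abs_neg, sub_neg_eq_add] at h
  calc |log (1 + y) - (y - y ^ 2 / 2 + y ^ 3 / 3 - y ^ 4 / 4)|
      = |∑ i ∈ range 4, (-y) ^ (i + 1) / (i + 1) + log (1 + y)| := by
        simp only [sum_range_succ, sum_range_zero]
        congr 1
        push_cast
        ring
    _ ≤ |y| ^ 5 / (1 - |y|) := h
    _ ≤ 2 * |y| ^ 5 := by
        rw [div_le_iff₀ (by linarith)]
        nlinarith [pow_nonneg (abs_nonneg y) 5]

lemma stirlingRemainder_sub_succ {j : ℕ} (hj : j ≠ 0) :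
    stirlingRemainder j - stirlingRemainder (j + 1) =
      (j + 1 / 2) * log (1 + 1 / j) - 1 - (1 / (12 * j) - 1 / (12 * (j + 1))) := by
  have hj0 : (0 : ℝ) < j := by positivity
  have hlog : log (1 + 1 / (j : ℝ)) = log (j + 1) - log j := by
    rw [← log_div (by positivity) hj0.ne', add_div, div_self hj0.ne', add_comm]
  have hfac : log ((j + 1)! : ℝ) = log (j + 1) + log j ! := by
    rw [Nat.factorial_succ, Nat.cast_mul, log_mul (by positivity) (by positivity)]
    push_cast
    rfl
  rw [stirlingRemainder, stirlingRemainder, hfac, hlog]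
  push_cast
  ring

lemma abs_stirlingRemainder_sub_succ_le {j : ℕ} (hj : j ≠ 0) :
    |stirlingRemainder j - stirlingRemainder (j + 1)| ≤ 8 * (1 / j ^ 3 - 1 / (j + 1) ^ 3) := by
  rw [stirlingRemainder_sub_succ hj]
  obtain rfl | hj2 := (Nat.one_le_iff_ne_zero.mpr hj).eq_or_lt
  · norm_num
    rw [abs_le]
    constructor <;> nlinarith [log_two_lt_d9, log_two_gt_d9]
  set x : ℝ := (j : ℝ)
  have hx : (2 : ℝ) ≤ x := by simp only [x]; exact_mod_cast hj2
  have hx0 : (0 : ℝ) < x := by linarith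
  set E := log (1 + 1 / x) - (1 / x - (1 / x) ^ 2 / 2 + (1 / x) ^ 3 / 3 - (1 / x) ^ 4 / 4)
  have hE : |E| ≤ 2 / x ^ 5 := by
    have hy : |1 / x| = 1 / x := abs_of_pos (by positivity)
    have := abs_log_one_add_sub_taylor_le (y := 1 / x)
      (by rw [hy, div_le_div_iff₀ hx0 two_pos]; linarith)
    rw [hy] at this
    exact this.trans_eq (by ring)
  -- the first four Taylor terms cancel the main part of the difference up to order `x⁻⁴`
  have hsplit : (x + 1 / 2) * log (1 + 1 / x) - 1 - (1 / (12 * x) - 1 / (12 * (x + 1)))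
      = -(1 / (12 * x ^ 3 * (x + 1)) + 1 / (8 * x ^ 4)) + (x + 1 / 2) * E := by
    simp only [E]
    field_simp
    ring
  rw [hsplit]
  calc |-(1 / (12 * x ^ 3 * (x + 1)) + 1 / (8 * x ^ 4)) + (x + 1 / 2) * E|
      ≤ (1 / (12 * x ^ 3 * (x + 1)) + 1 / (8 * x ^ 4)) + (x + 1 / 2) * (2 / x ^ 5) := by
        refine (abs_add_le _ _).trans (add_le_add (le_of_eq ?_) ?_)
        · rw [abs_neg, abs_of_pos (by positivity)]
        · rw [abs_mul, abs_of_pos (by positivity)]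
          gcongr
    _ = (53 * x ^ 2 + 75 * x + 24) / (24 * x ^ 5 * (x + 1)) := by
        field_simp
        ring
    _ ≤ 8 * (3 * x ^ 2 + 3 * x + 1) / (x ^ 3 * (x + 1) ^ 3) := by
        rw [div_le_div_iff₀ (by positivity) (by positivity)]
        nlinarith [pow_pos hx0 3, pow_pos hx0 4, pow_pos hx0 5, pow_pos hx0 6]
    _ = 8 * (1 / x ^ 3 - 1 / (x + 1) ^ 3) := by
        field_simp
        ring

lemma abs_stirlingRemainder_sub_le {j : ℕ} (hj : j ≠ 0) {N : ℕ} (hjN : j ≤ N) :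
    |stirlingRemainder j - stirlingRemainder N| ≤ 8 * (1 / j ^ 3 - 1 / N ^ 3) := by
  induction N, hjN using Nat.le_induction with
  | base => simp
  | succ N hjN ih =>
    calc |stirlingRemainder j - stirlingRemainder (N + 1)|
        ≤ |stirlingRemainder j - stirlingRemainder N|
          + |stirlingRemainder N - stirlingRemainder (N + 1)| := abs_sub_le _ _ _
      _ ≤ 8 * (1 / j ^ 3 - 1 / N ^ 3) + 8 * (1 / N ^ 3 - 1 / (N + 1) ^ 3) :=
          add_le_add ih (abs_stirlingRemainder_sub_succ_le (by omega))
      _ = 8 * (1 / j ^ 3 - 1 / ((N + 1 : ℕ) : ℝ) ^ 3) := by push_cast; ring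

lemma tendsto_stirlingRemainder_atTop : Tendsto stirlingRemainder atTop (𝓝 0) := by
  have hseq : Tendsto
      (fun n : ℕ => log (Stirling.stirlingSeq n) - log √π - 1 / (12 * (n : ℝ))) atTop (𝓝 0) := by
    have hlog := (continuousAt_log (by positivity)).tendsto.comp
      Stirling.tendsto_stirlingSeq_sqrt_pi
    have hinv : Tendsto (fun n : ℕ => 1 / (12 * (n : ℝ))) atTop (𝓝 0) := by
      simpa using ((tendsto_natCast_atTop_atTop (R := ℝ)).const_mul_atTop
        (by norm_num : (0 : ℝ) < 12)).const_div_atTop 1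
    simpa using (hlog.sub_const (log √π)).sub hinv
  refine hseq.congr' ?_
  filter_upwards [eventually_ne_atTop 0] with n hn
  have hn0 : (0 : ℝ) < n := by positivity
  rw [stirlingRemainder, Stirling.log_stirlingSeq_formula n, log_div hn0.ne' (by positivity),
    log_exp, log_mul two_ne_zero hn0.ne', log_mul two_ne_zero pi_ne_zero, log_sqrt pi_pos.le]
  ring

lemma abs_stirlingRemainder_le {j : ℕ} (hj : j ≠ 0) : |stirlingRemainder j| ≤ 8 / j ^ 3 := by
  have hlim : Tendsto (fun N => |stirlingRemainder j - stirlingRemainder N|)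
      atTop (𝓝 |stirlingRemainder j|) := by
    simpa using (tendsto_stirlingRemainder_atTop.const_sub (stirlingRemainder j)).abs
  refine le_of_tendsto hlim ?_
  filter_upwards [eventually_ge_atTop j] with N hN
  calc |stirlingRemainder j - stirlingRemainder N| ≤ 8 * (1 / j ^ 3 - 1 / N ^ 3) :=
        abs_stirlingRemainder_sub_le hj hN
    _ ≤ 8 / j ^ 3 := by
        rw [mul_sub, mul_one_div]
        linarith [show (0 : ℝ) ≤ 8 * (1 / N ^ 3) by positivity]

lemma log_Gamma_nat_add_half (k : ℕ) :
    log (Gamma (k + 1 / 2)) = log (2 * k)! - log k ! - 2 * k * log 2 + log π / 2 := by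
  have hdup := Gamma_mul_Gamma_add_half ((k : ℝ) + 1 / 2)
  have h2k : 2 * ((k : ℝ) + 1 / 2) = (2 * k : ℕ) + 1 := by push_cast; ring
  have hexp : (1 : ℝ) - ((2 * k : ℕ) + 1) = -(2 * k : ℕ) := by ring
  rw [add_assoc, add_halves, Gamma_nat_eq_factorial, h2k, Gamma_nat_eq_factorial, hexp,
    rpow_neg two_pos.le, rpow_natCast] at hdup
  have hG : 0 < Gamma (k + 1 / 2) := Gamma_pos_of_pos (by positivity)
  have := congrArg log hdup
  rw [log_mul hG.ne' (by positivity), log_mul (by positivity) (by positivity),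
    log_mul (by positivity) (by positivity), log_inv, log_pow, log_sqrt pi_pos.le] at this
  push_cast at this
  linarith

lemma neg_log_PKT (k m : ℕ) :
    -log (PKT (k + m) k) = log (k + m)! - log (2 * k)! - log (2 * m)! + log k ! + log m !
      + 2 * (k + m) * log 2 := by
  have hG : ∀ j : ℕ, 0 < Gamma (j + 1 / 2) := fun j => Gamma_pos_of_pos (by positivity)
  have hm : ((k + m : ℕ) : ℝ) - k + 1 / 2 = m + 1 / 2 := by push_cast; ring
  rw [PKT, hm, Gamma_nat_eq_factorial, log_div (mul_pos (hG k) (hG m)).ne' (by positivity),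
    log_mul (hG k).ne' (hG m).ne', log_mul pi_ne_zero (by positivity), log_Gamma_nat_add_half,
    log_Gamma_nat_add_half]
  ring

lemma neg_log_PKT_eq_expansion_add_remainders {k m : ℕ} (hk : k ≠ 0) (hm : m ≠ 0) :
    -log (PKT (k + m) k) =
      ((k + m) * log (k + m) - k * log k - m * log m) + log (k + m) / 2 + log (π / 2) / 2
        + 1 / (12 * (k + m)) + 1 / (24 * k) + 1 / (24 * m)
        + (stirlingRemainder (k + m) + stirlingRemainder k + stirlingRemainder m
          - stirlingRemainder (2 * k) - stirlingRemainder (2 * m)) := by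
  have hK : (0 : ℝ) < k := by positivity
  have hM : (0 : ℝ) < m := by positivity
  have hR : ∀ j : ℕ, log j ! = (j + 1 / 2) * log j - j + log (2 * π) / 2 + 1 / (12 * j)
      + stirlingRemainder j := fun j => by rw [stirlingRemainder]; ring
  rw [neg_log_PKT, hR, hR (2 * k), hR (2 * m), hR k, hR m, log_div pi_ne_zero two_ne_zero,
    log_mul two_ne_zero pi_ne_zero]
  push_cast
  rw [log_mul two_ne_zero hK.ne', log_mul two_ne_zero hM.ne']
  ring

lemma abs_stirlingRemainder_combination_le {k m : ℕ} (hk : k ≠ 0) (hm : m ≠ 0) :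
    |stirlingRemainder (k + m) + stirlingRemainder k + stirlingRemainder m
      - stirlingRemainder (2 * k) - stirlingRemainder (2 * m)|
      ≤ 17 * (1 / k ^ 3 + 1 / m ^ 3) := by
  have b1 : |stirlingRemainder (k + m)| ≤ 8 / k ^ 3 := by
    refine (abs_stirlingRemainder_le (by omega)).trans ?_
    gcongr
    linarith
  have b2 := abs_stirlingRemainder_le hk
  have b3 := abs_stirlingRemainder_le hm
  have b4 := abs_stirlingRemainder_le (j := 2 * k) (by omega)
  have b5 := abs_stirlingRemainder_le (j := 2 * m) (by omega)
  have c4 : 8 / (((2 * k : ℕ) : ℝ)) ^ 3 = 1 / k ^ 3 := by push_cast; field_simp; ring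
  have c5 : 8 / (((2 * m : ℕ) : ℝ)) ^ 3 = 1 / m ^ 3 := by push_cast; field_simp; ring
  rw [c4] at b4
  rw [c5] at b5
  calc _ ≤ |stirlingRemainder (k + m)| + |stirlingRemainder k| + |stirlingRemainder m|
        + |stirlingRemainder (2 * k)| + |stirlingRemainder (2 * m)| := by
        refine (abs_sub _ _).trans (add_le_add_left ((abs_sub _ _).trans (add_le_add_left ?_ _)) _)
        exact (abs_add_le _ _).trans (add_le_add_left (abs_add_le _ _) _)
    _ ≤ 17 * (1 / k ^ 3 + 1 / m ^ 3) := by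
        have hk3 : 8 / (k : ℝ) ^ 3 = 8 * (1 / k ^ 3) := by ring
        have hm3 : 8 / (m : ℝ) ^ 3 = 8 * (1 / m ^ 3) := by ring
        linarith [show 0 ≤ 1 / (m : ℝ) ^ 3 by positivity]

lemma natCast_mul_Femp {n : ℕ} (w : Fin n → Bool) (hk : bwt w ≠ 0) (hkn : bwt w < n) :
    n * Femp w = n * log n - bwt w * log (bwt w) - (n - bwt w) * log (n - bwt w) := by
  have hK : (0 : ℝ) < bwt w := by positivity
  have hN : (bwt w : ℝ) < n := by exact_mod_cast hkn
  have hN0 : (n : ℝ) ≠ 0 := by linarith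
  rw [Femp, log_div hK.ne' (by linarith), log_div (by linarith) (by linarith)]
  field_simp
  ring

/-- Stirling-type expansion of `−ln P_KT(w)` around the empirical
entropy, uniform in `n ≥ 2` and `0 < k < n`. -/
theorem stmt_4 :
    ∃ C : ℝ, 0 < C ∧ ∀ n : ℕ, 2 ≤ n → ∀ w : Fin n → Bool, 0 < bwt w → bwt w < n →
      |(-Real.log (PKTw w)) -
          ((n : ℝ) * Femp w + (1 / 2) * Real.log n + (1 / 2) * Real.log (Real.pi / 2) +
            1 / (12 * (n : ℝ)) + 1 / (24 * (bwt w : ℝ)) +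
            1 / (24 * ((n : ℝ) - (bwt w : ℝ))))| ≤
        C * (1 / (bwt w : ℝ) ^ 3 + 1 / ((n : ℝ) - (bwt w : ℝ)) ^ 3) := by
  refine ⟨17, by norm_num, fun n _ w hk hkn => ?_⟩
  obtain ⟨m, hnm⟩ := Nat.exists_eq_add_of_le hkn.le
  have hm : m ≠ 0 := by omega
  have hP : PKTw w = PKT (bwt w + m) (bwt w) := by rw [PKTw, ← hnm]
  have hn : (n : ℝ) = bwt w + m := by exact_mod_cast hnm
  have hnk : (n : ℝ) - bwt w = m := by rw [hn]; ring
  rw [hP, neg_log_PKT_eq_expansion_add_remainders hk.ne' hm, natCast_mul_Femp w hk.ne' hkn, hnk, hn]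
  convert abs_stirlingRemainder_combination_le hk.ne' hm using 2
  ring

end
end

section
/- For every integer n ≥ 1 and p ∈ (0,1) with q = 1−p, the average empirical entropy satisfies the exact identity Σ_{|w|=n} Pr(w)·F(w) = ln n − p·f(n−1, p) − q·f(n−1, q). -/
open Finset Real

noncomputable section

/-- Probability of a binary word under a memoryless source with parameter `p`. -/
def prW (p : ℝ) {n : ℕ} (w : Fin n → Bool) : ℝ := p ^ bwt w * (1 - p) ^ (n - bwt w)

/-- The binomial sum `f(m, θ) = Σ_{k=0}^{m} C(m,k) θ^k (1−θ)^{m−k} ln(1+k)`. -/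
def fBer (m : ℕ) (θ : ℝ) : ℝ :=
  ∑ k ∈ Finset.range (m + 1),
    (m.choose k : ℝ) * θ ^ k * (1 - θ) ^ (m - k) * Real.log (1 + (k : ℝ))

/-!
Since `F(w)` depends only on the weight `k` of `w`, the average is the mean of
`-(k/n) ln(k/n) - ((n-k)/n) ln((n-k)/n) = ln n - k ln k / n - (n-k) ln(n-k) / n`
under the binomial law `Bin(n, p)`. The absorption identity `k C(n,k) = n C(n-1,k-1)` turns the mean
of `k ln k` into `n p f(n-1, p)`, and the reflection `k ↦ n - k`, which exchanges `p` and `q`,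
turns the mean of `(n-k) ln(n-k)` into `n q f(n-1, q)`.
-/

def binomialMean (n : ℕ) (θ : ℝ) (g : ℝ → ℝ) : ℝ :=
  ∑ k ∈ range (n + 1), (n.choose k : ℝ) * θ ^ k * (1 - θ) ^ (n - k) * g k

namespace binomialMean

variable (n : ℕ) (θ : ℝ)

lemma const (c : ℝ) : binomialMean n θ (fun _ => c) = c :=
  calc binomialMean n θ (fun _ => c) = (θ + (1 - θ)) ^ n * c := by
        rw [add_pow, sum_mul, binomialMean]
        exact sum_congr rfl fun k _ => by ring
    _ = c := by rw [add_sub_cancel, one_pow, one_mul]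

lemma sub (f g : ℝ → ℝ) :
    binomialMean n θ (fun x => f x - g x) = binomialMean n θ f - binomialMean n θ g := by
  simp only [binomialMean, mul_sub, sum_sub_distrib]

lemma div_const (g : ℝ → ℝ) (c : ℝ) :
    binomialMean n θ (fun x => g x / c) = binomialMean n θ g / c := by
  simp only [binomialMean, sum_div, mul_div_assoc]

lemma reflect (g : ℝ → ℝ) :
    binomialMean n θ (fun x => g (n - x)) = binomialMean n (1 - θ) g := by
  rw [binomialMean, binomialMean, ← sum_range_reflect]
  refine sum_congr rfl fun k hk => ?_
  have hk : k ≤ n := Nat.lt_succ_iff.mp (mem_range.mp hk)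
  rw [add_tsub_cancel_right, Nat.choose_symm hk, Nat.sub_sub_self hk, Nat.cast_sub hk,
    sub_sub_cancel, sub_sub_cancel]
  ring

lemma id_mul (g : ℝ → ℝ) :
    binomialMean n θ (fun x => x * g x) = n * θ * binomialMean (n - 1) θ (fun x => g (1 + x)) := by
  cases n with
  | zero => simp [binomialMean]
  | succ m =>
    rw [binomialMean, sum_range_succ', binomialMean, mul_sum, add_tsub_cancel_right]
    simp only [Nat.cast_zero, zero_mul, mul_zero, add_zero]
    refine sum_congr rfl fun k _ => ?_
    have absorb : ((m + 1).choose (k + 1) : ℝ) * (k + 1) = (m + 1) * m.choose k := by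
      exact_mod_cast (Nat.add_one_mul_choose_eq m k).symm
    rw [Nat.succ_sub_succ, Nat.cast_succ, Nat.cast_succ, add_comm 1 (k : ℝ)]
    linear_combination θ ^ (k + 1) * (1 - θ) ^ (m - k) * g (k + 1) * absorb

end binomialMean

lemma sum_comp_bwt {n : ℕ} (H : ℕ → ℝ) :
    ∑ w : Fin n → Bool, H (bwt w) = ∑ k ∈ range (n + 1), (n.choose k : ℝ) * H k := by
  have hsubsets : ∑ w : Fin n → Bool, H (bwt w) = ∑ s ∈ (univ : Finset (Fin n)).powerset, H #s := by
    refine sum_nbij' (fun w => univ.filter (w · = true)) (fun s i => decide (i ∈ s))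
      ?_ ?_ ?_ ?_ ?_ <;> simp [bwt]
  rw [hsubsets, sum_powerset_apply_card, card_univ, Fintype.card_fin]
  simp only [nsmul_eq_mul]

lemma sum_prW_mul_eq_binomialMean {n : ℕ} (p : ℝ) (G : ℝ → ℝ) :
    ∑ w : Fin n → Bool, prW p w * G (bwt w) = binomialMean n p G := by
  calc ∑ w : Fin n → Bool, prW p w * G (bwt w)
      = ∑ k ∈ range (n + 1), (n.choose k : ℝ) * (p ^ k * (1 - p) ^ (n - k) * G k) :=
        sum_comp_bwt fun k => p ^ k * (1 - p) ^ (n - k) * G k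
    _ = binomialMean n p G := sum_congr rfl fun k _ => by ring

lemma mul_log_div_eq {x y : ℝ} (hy : y ≠ 0) : x * log (x / y) = x * log x - x * log y := by
  rcases eq_or_ne x 0 with rfl | hx
  · simp
  · rw [log_div hx hy, mul_sub]

lemma Femp_eq_log_sub {n : ℕ} (hn : n ≠ 0) (w : Fin n → Bool) :
    Femp w = log n - bwt w * log (bwt w) / n - (n - bwt w) * log (n - bwt w) / n := by
  have hn : (n : ℝ) ≠ 0 := Nat.cast_ne_zero.mpr hn
  have hsplit (x : ℝ) : x / n * log (x / n) = (x * log x - x * log n) / n := by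
    rw [div_mul_eq_mul_div, mul_log_div_eq hn]
  rw [Femp, neg_mul, hsplit, hsplit]
  field_simp
  ring

lemma fBer_eq_binomialMean (m : ℕ) (θ : ℝ) : fBer m θ = binomialMean m θ (fun x => log (1 + x)) :=
  rfl

theorem stmt_5_general (n : ℕ) (hn : 1 ≤ n) (p : ℝ) :
    ∑ w : Fin n → Bool, prW p w * Femp w =
      Real.log n - p * fBer (n - 1) p - (1 - p) * fBer (n - 1) (1 - p) := by
  have hn0 : n ≠ 0 := Nat.one_le_iff_ne_zero.mp hn
  have hmean : ∑ w : Fin n → Bool, prW p w * Femp w =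
      binomialMean n p (fun x => log n - x * log x / n - (n - x) * log (n - x) / n) := by
    simp_rw [Femp_eq_log_sub hn0, ← sum_prW_mul_eq_binomialMean]
  rw [hmean, binomialMean.sub, binomialMean.sub, binomialMean.const, binomialMean.div_const,
    binomialMean.div_const, binomialMean.reflect n p (fun x => x * log x), binomialMean.id_mul,
    binomialMean.id_mul, fBer_eq_binomialMean, fBer_eq_binomialMean]
  field_simp [Nat.cast_ne_zero.mpr hn0]

/-- exact identity for the average empirical entropy:
`Σ_{|w|=n} Pr(w)·F(w) = ln n − p·f(n−1,p) − q·f(n−1,q)`. -/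
theorem stmt_5 (n : ℕ) (hn : 1 ≤ n) (p : ℝ) (hp : p ∈ Set.Ioo (0 : ℝ) 1) :
    ∑ w : Fin n → Bool, prW p w * Femp w =
      Real.log n - p * fBer (n - 1) p - (1 - p) * fBer (n - 1) (1 - p) :=
  stmt_5_general n hn p

end
end

section
/- Fix θ ∈ (0,1). Then, as n → ∞, Σ_{k=1}^{n} C(n,k) θ^k (1−θ)^{n−k} · ln k = ln(θn) + (θ−1)/(2θn) − (θ²−6θ+5)/(12θ²n²) + O(1/n³); that is, there exist C > 0 and N such that for all n ≥ N the absolute difference between the sum and the displayed three-term expression is at most C/n³. -/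
/-!
Write `K ~ Bin(n, θ)`, `μ = θn` and `X = (K - μ) / μ`, so that the sum is `E[log K]` and
`log K = log μ + log (1 + X)`. Replace `log (1 + X)` by its Taylor polynomial
`X - X²/2 + X³/3 - X⁴/4 + X⁵/5`: the error is at most `2X⁶` where `|X| ≤ 1/2`, and at most a
constant times `μX⁸` elsewhere, because there `|log K| ≤ K` and `|log μ| ≤ μ` are dominated by
`μ(2|X|)⁸`. Pascal's rule turns `K` into `K' + B` with `K' ~ Bin(n - 1, θ)` and `B` Bernoulli, which
gives a recursion in `n` for the central moments and shows `E[(K - μ)^m] = O(n^⌊m/2⌋)`. Hence the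
errors and the `X⁵` term are `O(n⁻³)`, and the exact central moments of order `2, 3, 4` produce
the two correction terms.
-/

open Finset Real

noncomputable section

def binomialExpect (p : ℝ) (n : ℕ) (f : ℕ → ℝ) : ℝ :=
  ∑ k ∈ range (n + 1), (n.choose k : ℝ) * p ^ k * (1 - p) ^ (n - k) * f k

section

variable {p : ℝ} {n : ℕ}

theorem binomialExpect_const (c : ℝ) : binomialExpect p n (fun _ => c) = c := by
  have h := (add_pow p (1 - p) n).symm
  rw [add_sub_cancel, one_pow] at h
  calc binomialExpect p n (fun _ => c)
      = (∑ k ∈ range (n + 1), p ^ k * (1 - p) ^ (n - k) * n.choose k) * c := by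
        rw [binomialExpect, Finset.sum_mul]
        exact sum_congr rfl fun _ _ => by ring
    _ = c := by rw [h, one_mul]

theorem binomialExpect_add (f g : ℕ → ℝ) :
    binomialExpect p n (fun k => f k + g k) = binomialExpect p n f + binomialExpect p n g := by
  simp only [binomialExpect, mul_add, sum_add_distrib]

theorem binomialExpect_sub (f g : ℕ → ℝ) :
    binomialExpect p n (fun k => f k - g k) = binomialExpect p n f - binomialExpect p n g := by
  simp only [binomialExpect, mul_sub, sum_sub_distrib]

theorem binomialExpect_const_mul (c : ℝ) (f : ℕ → ℝ) :
    binomialExpect p n (fun k => c * f k) = c * binomialExpect p n f := by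
  simp only [binomialExpect, Finset.mul_sum]
  exact sum_congr rfl fun _ _ => by ring

theorem binomialExpect_sum_mul {ι : Type*} (s : Finset ι) (c : ι → ℝ) (f : ι → ℕ → ℝ) :
    binomialExpect p n (fun k => ∑ i ∈ s, c i * f i k) =
      ∑ i ∈ s, c i * binomialExpect p n (f i) := by
  simp only [binomialExpect, Finset.mul_sum]
  rw [sum_comm]
  exact sum_congr rfl fun _ _ => sum_congr rfl fun _ _ => by ring

theorem binomialExpect_div_const (f : ℕ → ℝ) (c : ℝ) :
    binomialExpect p n (fun k => f k / c) = binomialExpect p n f / c := by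
  simp only [binomialExpect, sum_div, mul_div_assoc]

theorem binomialExpect_mono (hp : p ∈ Set.Icc 0 1) {f g : ℕ → ℝ} (hfg : ∀ k, f k ≤ g k) :
    binomialExpect p n f ≤ binomialExpect p n g := by
  have : 0 ≤ 1 - p := by linarith [hp.2]
  exact sum_le_sum fun k _ => mul_le_mul_of_nonneg_left (hfg k) (by have := hp.1; positivity)

theorem binomialExpect_abs_le (hp : p ∈ Set.Icc 0 1) (f : ℕ → ℝ) :
    |binomialExpect p n f| ≤ binomialExpect p n (fun k => |f k|) := by
  refine (abs_sum_le_sum_abs _ _).trans_eq (sum_congr rfl fun k _ => ?_)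
  have : 0 ≤ 1 - p := by linarith [hp.2]
  rw [abs_mul, abs_of_nonneg (by have := hp.1; positivity)]

theorem binomialExpect_succ (f : ℕ → ℝ) :
    binomialExpect p (n + 1) f = binomialExpect p n (fun k => (1 - p) * f k + p * f (k + 1)) := by
  have hq : ∑ k ∈ range (n + 1), (n.choose k : ℝ) * p ^ k * (1 - p) ^ (n - k) * ((1 - p) * f k)
      = ∑ k ∈ range (n + 2), (n.choose k : ℝ) * p ^ k * (1 - p) ^ (n + 1 - k) * f k := by
    rw [sum_range_succ _ (n + 1), Nat.choose_succ_self, Nat.cast_zero, zero_mul, zero_mul,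
      zero_mul, add_zero]
    refine sum_congr rfl fun k hk => ?_
    rw [Nat.succ_sub (Nat.lt_succ_iff.1 (mem_range.1 hk)), pow_succ]
    ring
  simp only [binomialExpect, mul_add, sum_add_distrib, hq]
  rw [sum_range_succ' _ (n + 1), sum_range_succ' _ (n + 1)]
  simp only [Nat.choose_succ_succ', Nat.cast_add, add_mul, sum_add_distrib, Nat.succ_sub_succ,
    Nat.choose_zero_right]
  rw [add_assoc, add_comm]
  congr 1
  exact sum_congr rfl fun k _ => by ring

end

def binomialCentralMoment (p : ℝ) (n m : ℕ) : ℝ :=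
  binomialExpect p n (fun k => ((k : ℝ) - p * n) ^ m)

def bernoulliCentralMoment (p : ℝ) (r : ℕ) : ℝ :=
  (1 - p) * (-p) ^ r + p * (1 - p) ^ r

theorem bernoulliCentralMoment_zero (p : ℝ) : bernoulliCentralMoment p 0 = 1 := by
  simp [bernoulliCentralMoment]

theorem bernoulliCentralMoment_one (p : ℝ) : bernoulliCentralMoment p 1 = 0 := by
  simp only [bernoulliCentralMoment]; ring

theorem abs_bernoulliCentralMoment_le_one {p : ℝ} (hp : p ∈ Set.Icc 0 1) (r : ℕ) :
    |bernoulliCentralMoment p r| ≤ 1 := by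
  obtain ⟨hp₀, hp₁⟩ := hp
  have hq₀ : 0 ≤ 1 - p := by linarith
  have h₁ : |(-p) ^ r| ≤ 1 := by rw [abs_pow, abs_neg, abs_of_nonneg hp₀]; exact pow_le_one₀ hp₀ hp₁
  have h₂ : |(1 - p) ^ r| ≤ 1 := by
    rw [abs_pow, abs_of_nonneg hq₀]; exact pow_le_one₀ hq₀ (by linarith)
  calc |bernoulliCentralMoment p r| ≤ (1 - p) * |(-p) ^ r| + p * |(1 - p) ^ r| := by
        rw [bernoulliCentralMoment]
        refine (abs_add_le _ _).trans_eq ?_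
        rw [abs_mul, abs_mul, abs_of_nonneg hq₀, abs_of_nonneg hp₀]
    _ ≤ (1 - p) * 1 + p * 1 := by gcongr
    _ = 1 := by ring

theorem binomialCentralMoment_succ (p : ℝ) (n m : ℕ) :
    binomialCentralMoment p (n + 1) m = ∑ i ∈ range (m + 1),
      m.choose i * bernoulliCentralMoment p (m - i) * binomialCentralMoment p n i := by
  simp only [binomialCentralMoment, binomialExpect_succ, ← binomialExpect_sum_mul]
  congr 1
  funext k
  have h₀ : (k : ℝ) - p * (n + 1 : ℕ) = ((k : ℝ) - p * n) + -p := by push_cast; ring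
  have h₁ : ((k + 1 : ℕ) : ℝ) - p * (n + 1 : ℕ) = ((k : ℝ) - p * n) + (1 - p) := by push_cast; ring
  rw [h₀, h₁, add_pow, add_pow, Finset.mul_sum, Finset.mul_sum, ← sum_add_distrib]
  exact sum_congr rfl fun i _ => by rw [bernoulliCentralMoment]; ring

theorem binomialCentralMoment_zero_left (p : ℝ) (m : ℕ) :
    binomialCentralMoment p 0 m = 0 ^ m := by
  simp [binomialCentralMoment, binomialExpect]

theorem binomialCentralMoment_zero_right (p : ℝ) (n : ℕ) : binomialCentralMoment p n 0 = 1 := by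
  simp only [binomialCentralMoment, pow_zero, binomialExpect_const]

theorem binomialCentralMoment_one (p : ℝ) (n : ℕ) : binomialCentralMoment p n 1 = 0 := by
  induction n with
  | zero => simp [binomialCentralMoment_zero_left]
  | succ n ih =>
    simp only [binomialCentralMoment_succ, sum_range_succ, sum_range_zero, Nat.choose,
      Nat.reduceSub, Nat.cast_one, bernoulliCentralMoment, binomialCentralMoment_zero_right, ih]
    ring

theorem binomialCentralMoment_two (p : ℝ) (n : ℕ) :
    binomialCentralMoment p n 2 = n * p * (1 - p) := by
  induction n with
  | zero => simp [binomialCentralMoment_zero_left]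
  | succ n ih =>
    simp only [binomialCentralMoment_succ, sum_range_succ, sum_range_zero, Nat.choose,
      Nat.reduceSub, Nat.cast_one, bernoulliCentralMoment, binomialCentralMoment_zero_right,
      binomialCentralMoment_one, ih]
    push_cast
    ring

theorem binomialCentralMoment_three (p : ℝ) (n : ℕ) :
    binomialCentralMoment p n 3 = n * p * (1 - p) * (1 - 2 * p) := by
  induction n with
  | zero => simp [binomialCentralMoment_zero_left]
  | succ n ih =>
    simp only [binomialCentralMoment_succ, sum_range_succ, sum_range_zero, Nat.choose,
      Nat.reduceSub, Nat.cast_one, bernoulliCentralMoment, binomialCentralMoment_zero_right,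
      binomialCentralMoment_one, binomialCentralMoment_two, ih]
    push_cast
    ring

theorem binomialCentralMoment_four (p : ℝ) (n : ℕ) :
    binomialCentralMoment p n 4 =
      3 * (n * p * (1 - p)) ^ 2 + n * p * (1 - p) * (1 - 6 * p * (1 - p)) := by
  induction n with
  | zero => simp [binomialCentralMoment_zero_left]
  | succ n ih =>
    simp only [binomialCentralMoment_succ, sum_range_succ, sum_range_zero, Nat.choose,
      Nat.reduceSub, Nat.cast_one, bernoulliCentralMoment, binomialCentralMoment_zero_right,
      binomialCentralMoment_one, binomialCentralMoment_two, binomialCentralMoment_three, ih]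
    push_cast
    ring

theorem abs_le_mul_pow_of_abs_sub_le {a : ℕ → ℝ} {D : ℝ} {r : ℕ} (h₀ : a 0 = 0)
    (h : ∀ n : ℕ, |a (n + 1) - a n| ≤ D * ((n : ℝ) + 1) ^ r) (n : ℕ) :
    |a n| ≤ D * (n : ℝ) ^ (r + 1) := by
  have hD : 0 ≤ D := by
    have := (abs_nonneg _).trans (h 0)
    rwa [Nat.cast_zero, zero_add, one_pow, mul_one] at this
  induction n with
  | zero => simp [h₀]
  | succ n ih =>
    have hpow : (n : ℝ) ^ (r + 1) + ((n : ℝ) + 1) ^ r ≤ ((n : ℝ) + 1) ^ (r + 1) := by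
      have : (n : ℝ) ^ r ≤ ((n : ℝ) + 1) ^ r := by gcongr; linarith
      rw [pow_succ', pow_succ' _ r]
      nlinarith [pow_nonneg (n.cast_nonneg : (0 : ℝ) ≤ n) r]
    calc |a (n + 1)| ≤ |a n| + |a (n + 1) - a n| := by
          simpa using abs_add_le (a n) (a (n + 1) - a n)
      _ ≤ D * (n : ℝ) ^ (r + 1) + D * ((n : ℝ) + 1) ^ r := add_le_add ih (h n)
      _ ≤ D * ((n + 1 : ℕ) : ℝ) ^ (r + 1) := by
          rw [← mul_add]; push_cast; exact mul_le_mul_of_nonneg_left hpow hD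

theorem abs_binomialCentralMoment_succ_sub_le {p : ℝ} (hp : p ∈ Set.Icc 0 1) {j : ℕ}
    {C : ℕ → ℝ} (hC₀ : ∀ i ≤ j, 0 ≤ C i)
    (hC : ∀ i ≤ j, ∀ n : ℕ, |binomialCentralMoment p n i| ≤ C i * (n : ℝ) ^ (i / 2)) (n : ℕ) :
    |binomialCentralMoment p (n + 1) (j + 2) - binomialCentralMoment p n (j + 2)| ≤
      (∑ i ∈ range (j + 1), ((j + 2).choose i : ℝ) * C i) * ((n : ℝ) + 1) ^ (j / 2) := by
  rw [binomialCentralMoment_succ, sum_range_succ, sum_range_succ, Nat.sub_self,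
    show j + 2 - (j + 1) = 1 by omega, bernoulliCentralMoment_zero, bernoulliCentralMoment_one,
    Nat.choose_self, Nat.cast_one, one_mul, one_mul, mul_zero, zero_mul, add_zero,
    add_sub_cancel_right, Finset.sum_mul]
  refine (abs_sum_le_sum_abs _ _).trans (sum_le_sum fun i hi => ?_)
  have hij : i ≤ j := Nat.lt_succ_iff.1 (mem_range.1 hi)
  have hpow : (n : ℝ) ^ (i / 2) ≤ ((n : ℝ) + 1) ^ (j / 2) :=
    (pow_le_pow_left₀ n.cast_nonneg (by linarith) _).trans
      (pow_le_pow_right₀ (by linarith [n.cast_nonneg (α := ℝ)]) (by omega))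
  calc |((j + 2).choose i : ℝ) * bernoulliCentralMoment p (j + 2 - i) *
        binomialCentralMoment p n i|
      = ((j + 2).choose i : ℝ) *
          (|bernoulliCentralMoment p (j + 2 - i)| * |binomialCentralMoment p n i|) := by
        rw [abs_mul, abs_mul, Nat.abs_cast, mul_assoc]
    _ ≤ ((j + 2).choose i : ℝ) * (1 * (C i * (n : ℝ) ^ (i / 2))) := by
        gcongr
        exacts [abs_bernoulliCentralMoment_le_one hp _, hC i hij n]
    _ ≤ ((j + 2).choose i : ℝ) * C i * ((n : ℝ) + 1) ^ (j / 2) := by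
        rw [one_mul, mul_assoc]
        exact mul_le_mul_of_nonneg_left (mul_le_mul_of_nonneg_left hpow (hC₀ i hij)) (by positivity)

theorem exists_abs_binomialCentralMoment_le {p : ℝ} (hp : p ∈ Set.Icc 0 1) (m : ℕ) :
    ∃ C, 0 < C ∧ ∀ n : ℕ, |binomialCentralMoment p n m| ≤ C * (n : ℝ) ^ (m / 2) := by
  induction m using Nat.strong_induction_on with
  | _ m ih =>
  match m with
  | 0 => exact ⟨1, one_pos, fun n => by simp [binomialCentralMoment_zero_right]⟩
  | 1 => exact ⟨1, one_pos, fun n => by simp [binomialCentralMoment_one]⟩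
  | j + 2 =>
    choose! C hC₀ hC using ih
    set D := ∑ i ∈ range (j + 1), ((j + 2).choose i : ℝ) * C i
    have hD : 0 ≤ D := sum_nonneg fun i hi => by
      have := hC₀ i (by simp at hi; omega); positivity
    have hstep := abs_binomialCentralMoment_succ_sub_le hp (j := j) (fun i hi => (hC₀ i (by omega)).le)
      (fun i hi => hC i (by omega))
    refine ⟨D + 1, by positivity, fun n => ?_⟩
    have := abs_le_mul_pow_of_abs_sub_le (a := fun n => binomialCentralMoment p n (j + 2))
      (by simp [binomialCentralMoment_zero_left]) hstep n
    rw [show (j + 2) / 2 = j / 2 + 1 by omega]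
    exact this.trans (by gcongr; linarith)

def relativeDeviation (p : ℝ) (n k : ℕ) : ℝ := ((k : ℝ) - p * n) / (p * n)

theorem binomialExpect_relativeDeviation_pow (p : ℝ) (n m : ℕ) :
    binomialExpect p n (fun k => relativeDeviation p n k ^ m) =
      binomialCentralMoment p n m / (p * n) ^ m := by
  simp only [relativeDeviation, div_pow]
  exact binomialExpect_div_const _ _

theorem exists_abs_binomialExpect_relativeDeviation_pow_le {p : ℝ} (hp : p ∈ Set.Ioc 0 1) (m : ℕ) :
    ∃ C, 0 < C ∧ ∀ n : ℕ, 1 ≤ n →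
      |binomialExpect p n (fun k => relativeDeviation p n k ^ m)| ≤
        C / (n : ℝ) ^ (m - m / 2) := by
  obtain ⟨C, hC₀, hC⟩ := exists_abs_binomialCentralMoment_le (Set.Ioc_subset_Icc_self hp) m
  refine ⟨C / p ^ m, div_pos hC₀ (pow_pos hp.1 m), fun n hn => ?_⟩
  have hn₀ : (0 : ℝ) < n := by exact_mod_cast hn
  have hsplit : (n : ℝ) ^ m = n ^ (m / 2) * n ^ (m - m / 2) := by
    rw [← pow_add, Nat.add_sub_cancel' (Nat.div_le_self m 2)]
  rw [binomialExpect_relativeDeviation_pow, abs_div, abs_of_pos (pow_pos (mul_pos hp.1 hn₀) m),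
    div_le_div_iff₀ (pow_pos (mul_pos hp.1 hn₀) m) (by positivity), mul_pow, hsplit]
  calc |binomialCentralMoment p n m| * (n : ℝ) ^ (m - m / 2)
      ≤ C * n ^ (m / 2) * n ^ (m - m / 2) := by gcongr; exact hC n
    _ = C / p ^ m * (p ^ m * (n ^ (m / 2) * n ^ (m - m / 2))) := by
      field_simp [(pow_pos hp.1 m).ne']

def logTaylor (d : ℕ) (x : ℝ) : ℝ := ∑ i ∈ range d, (-1) ^ i / (i + 1) * x ^ (i + 1)

theorem abs_log_one_add_sub_logTaylor_le {x : ℝ} (hx : |x| < 1) (d : ℕ) :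
    |log (1 + x) - logTaylor d x| ≤ |x| ^ (d + 1) / (1 - |x|) := by
  have h := Real.abs_log_sub_add_sum_range_le (x := -x) (by rwa [abs_neg]) d
  rw [abs_neg, sub_neg_eq_add] at h
  convert h using 2
  rw [logTaylor, sub_eq_neg_add, ← sum_neg_distrib]
  congr 1
  exact sum_congr rfl fun i _ => by rw [neg_pow x, pow_succ (-1 : ℝ)]; ring

theorem abs_logTaylor_le (d : ℕ) (x : ℝ) : |logTaylor d x| ≤ ∑ i ∈ range d, |x| ^ (i + 1) := by
  refine (abs_sum_le_sum_abs _ _).trans (sum_le_sum fun i _ => ?_)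
  rw [abs_mul, abs_div, abs_pow, abs_neg, abs_one, one_pow, abs_pow]
  have : (1 : ℝ) ≤ |(i : ℝ) + 1| := by
    rw [abs_of_pos (by positivity)]; linarith [i.cast_nonneg (α := ℝ)]
  calc 1 / |(i : ℝ) + 1| * |x| ^ (i + 1) ≤ 1 * |x| ^ (i + 1) := by
        gcongr; exact div_le_one_of_le₀ this (abs_nonneg _)
    _ = |x| ^ (i + 1) := one_mul _

theorem abs_log_natCast_le (k : ℕ) : |log k| ≤ k := by
  rw [abs_of_nonneg (log_natCast_nonneg k)]; exact log_le_self k.cast_nonneg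

theorem abs_log_sub_log_sub_logTaylor_le {μ x : ℝ} (hμ : 1 ≤ μ) {k : ℕ}
    (hk : (k : ℝ) = μ * (1 + x)) :
    |log k - log μ - logTaylor 5 x| ≤ 2 * x ^ 6 + 2048 * μ * x ^ 8 := by
  have hx8 : 0 ≤ 2048 * μ * x ^ 8 := by positivity
  rcases le_or_gt |x| (1 / 2) with hx | hx
  · have hx1 : 0 < 1 + x := by linarith [neg_abs_le x]
    have hlog : log k - log μ = log (1 + x) := by
      rw [hk, log_mul (by positivity) hx1.ne']; ring
    have h6 : |x| ^ 6 / (1 - |x|) ≤ 2 * x ^ 6 := by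
      have : |x| ^ 6 = x ^ 6 := by rw [pow_abs, abs_of_nonneg (by positivity)]
      rw [div_le_iff₀ (by linarith), this]
      nlinarith [pow_nonneg (sq_nonneg x) 3]
    rw [hlog]
    linarith [abs_log_one_add_sub_logTaylor_le (x := x) (by linarith) 5]
  · have hpow : ∀ j ≤ 8, |x| ^ j ≤ 256 * x ^ 8 := fun j hj =>
      calc |x| ^ j ≤ (2 * |x|) ^ j := by gcongr; linarith [abs_nonneg x]
        _ ≤ (2 * |x|) ^ 8 := pow_le_pow_right₀ (by linarith) hj
        _ = 256 * x ^ 8 := by rw [mul_pow, pow_abs, abs_of_nonneg (by positivity)]; norm_num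
    have hT : |logTaylor 5 x| ≤ 5 * (256 * x ^ 8) :=
      calc |logTaylor 5 x| ≤ ∑ i ∈ range 5, |x| ^ (i + 1) := abs_logTaylor_le 5 x
        _ ≤ ∑ _i ∈ range 5, 256 * x ^ 8 := sum_le_sum fun i hi => hpow _ (by simp at hi; omega)
        _ = 5 * (256 * x ^ 8) := by simp
    have hlogk := abs_log_natCast_le k
    have hlogμ : |log μ| ≤ μ := by
      rw [abs_of_nonneg (log_nonneg hμ)]; exact log_le_self (by linarith)
    have h0 : 1 ≤ 256 * x ^ 8 := by simpa using hpow 0 (by norm_num)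
    have h1 : |x| ≤ 256 * x ^ 8 := by simpa using hpow 1 (by norm_num)
    have : 1 + x ≤ 1 + |x| := by linarith [le_abs_self x]
    calc |log k - log μ - logTaylor 5 x| ≤ |log k| + |log μ| + |logTaylor 5 x| :=
          (abs_sub _ _).trans (by gcongr; exact abs_sub _ _)
      _ ≤ μ * (1 + |x|) + μ + 5 * (256 * x ^ 8) := by
          gcongr
          · exact hlogk.trans (hk.trans_le (by gcongr))
      _ ≤ 2 * x ^ 6 + 2048 * μ * x ^ 8 := by
          nlinarith [pow_nonneg (sq_nonneg x) 3, mul_le_mul_of_nonneg_left h0 (by linarith : 0 ≤ μ),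
            mul_le_mul_of_nonneg_left h1 (by linarith : 0 ≤ μ)]

theorem sum_Icc_choose_mul_log_eq_binomialExpect (p : ℝ) (n : ℕ) :
    ∑ k ∈ Icc 1 n, (n.choose k : ℝ) * p ^ k * (1 - p) ^ (n - k) * log k =
      binomialExpect p n (fun k => log k) := by
  refine sum_subset (fun k hk => by simp only [mem_Icc, mem_range] at hk ⊢; omega)
    fun k hk hk' => ?_
  obtain rfl : k = 0 := by simp only [mem_Icc, mem_range] at hk hk'; omega
  simp

theorem abs_binomialExpect_log_sub_logTaylor_le {p : ℝ} (hp : p ∈ Set.Icc 0 1) {n : ℕ}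
    (hμ : 1 ≤ p * n) :
    |binomialExpect p n (fun k => log k) - log (p * n) -
        binomialExpect p n (fun k => logTaylor 5 (relativeDeviation p n k))| ≤
      2 * binomialExpect p n (fun k => relativeDeviation p n k ^ 6) +
        2048 * (p * n) * binomialExpect p n (fun k => relativeDeviation p n k ^ 8) := by
  rw [← binomialExpect_const (p := p) (n := n) (log (p * n)), ← binomialExpect_sub,
    ← binomialExpect_sub, ← binomialExpect_const_mul, ← binomialExpect_const_mul,
    ← binomialExpect_add]
  refine (binomialExpect_abs_le hp _).trans (binomialExpect_mono hp fun k => ?_)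
  have hμ₀ : p * n ≠ 0 := (by linarith : (0 : ℝ) < p * n).ne'
  exact abs_log_sub_log_sub_logTaylor_le hμ (by
    rw [relativeDeviation, mul_add, mul_one, mul_div_cancel₀ _ hμ₀]; ring)

theorem binomialExpect_logTaylor_five {p : ℝ} (hp : p ≠ 0) {n : ℕ} (hn : n ≠ 0) :
    binomialExpect p n (fun k => logTaylor 5 (relativeDeviation p n k)) =
      (p - 1) / (2 * p * n) - (p ^ 2 - 6 * p + 5) / (12 * p ^ 2 * n ^ 2) -
        (1 - p) * (1 - 6 * p * (1 - p)) / (4 * p ^ 3 * n ^ 3) +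
        binomialExpect p n (fun k => relativeDeviation p n k ^ 5) / 5 := by
  simp only [logTaylor]
  rw [binomialExpect_sum_mul (f := fun i k => relativeDeviation p n k ^ (i + 1))]
  simp only [sum_range_succ, sum_range_zero, zero_add, Nat.reduceAdd,
    binomialExpect_relativeDeviation_pow, binomialCentralMoment_one, binomialCentralMoment_two,
    binomialCentralMoment_three, binomialCentralMoment_four]
  have : (n : ℝ) ≠ 0 := Nat.cast_ne_zero.2 hn
  field_simp
  ring

theorem abs_binomialExpect_log_sub_expansion_le {p : ℝ} (hp : p ∈ Set.Ioo 0 1) {n : ℕ}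
    (hμ : 1 ≤ p * n) :
    |binomialExpect p n (fun k => log k) -
        (log (p * n) + (p - 1) / (2 * p * n) - (p ^ 2 - 6 * p + 5) / (12 * p ^ 2 * n ^ 2))| ≤
      2 * binomialExpect p n (fun k => relativeDeviation p n k ^ 6) +
        2048 * (p * n) * binomialExpect p n (fun k => relativeDeviation p n k ^ 8) +
        |binomialExpect p n (fun k => relativeDeviation p n k ^ 5)| / 5 +
        1 / (4 * p ^ 3 * n ^ 3) := by
  obtain ⟨hp₀, hp₁⟩ := hp
  have hn : n ≠ 0 := by rintro rfl; simp at hμ; linarith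
  have hden : 0 < 4 * p ^ 3 * (n : ℝ) ^ 3 := by positivity
  have hq : |(1 - p) * (1 - 6 * p * (1 - p))| ≤ 1 := by
    have h₁ : |1 - 6 * p * (1 - p)| ≤ 1 :=
      abs_le.2 ⟨by nlinarith [sq_nonneg (2 * p - 1)], by nlinarith⟩
    rw [abs_mul, abs_of_pos (by linarith : 0 < 1 - p)]
    nlinarith [abs_nonneg (1 - 6 * p * (1 - p))]
  have hrem := abs_binomialExpect_log_sub_logTaylor_le ⟨hp₀.le, hp₁.le⟩ hμ
  rw [binomialExpect_logTaylor_five hp₀.ne' hn] at hrem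
  set E₅ := binomialExpect p n (fun k => relativeDeviation p n k ^ 5)
  set R := binomialExpect p n (fun k => log k) - log (p * n) -
    ((p - 1) / (2 * p * n) - (p ^ 2 - 6 * p + 5) / (12 * p ^ 2 * n ^ 2) -
      (1 - p) * (1 - 6 * p * (1 - p)) / (4 * p ^ 3 * n ^ 3) + E₅ / 5)
  calc _ = |R + E₅ / 5 - (1 - p) * (1 - 6 * p * (1 - p)) / (4 * p ^ 3 * n ^ 3)| := by
        congr 1; ring
    _ ≤ |R| + |E₅| / 5 + |(1 - p) * (1 - 6 * p * (1 - p))| / (4 * p ^ 3 * n ^ 3) := by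
        refine (abs_sub _ _).trans (add_le_add ((abs_add_le _ _).trans_eq ?_) ?_)
        · rw [abs_div, abs_of_pos (by norm_num : (0 : ℝ) < 5)]
        · rw [abs_div, abs_of_pos hden]
    _ ≤ _ := by gcongr

/-- Flajolet: asymptotics of the Bernoulli sum with weight `ln k`
(the `k = 1` term contributes `0` since `Real.log 1 = 0`). -/
theorem stmt_11 (θ : ℝ) (hθ : θ ∈ Set.Ioo (0 : ℝ) 1) :
    ∃ C : ℝ, 0 < C ∧ ∃ N : ℕ, ∀ n : ℕ, N ≤ n →
      |(∑ k ∈ Finset.Icc 1 n,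
            (n.choose k : ℝ) * θ ^ k * (1 - θ) ^ (n - k) * Real.log (k : ℝ)) -
          (Real.log (θ * (n : ℝ)) + (θ - 1) / (2 * θ * (n : ℝ)) -
            (θ ^ 2 - 6 * θ + 5) / (12 * θ ^ 2 * (n : ℝ) ^ 2))| ≤ C / (n : ℝ) ^ 3 := by
  have hθ' : θ ∈ Set.Ioc 0 1 := Set.Ioo_subset_Ioc_self hθ
  obtain ⟨A₅, hA₅, h₅⟩ := exists_abs_binomialExpect_relativeDeviation_pow_le hθ' 5
  obtain ⟨A₆, hA₆, h₆⟩ := exists_abs_binomialExpect_relativeDeviation_pow_le hθ' 6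
  obtain ⟨A₈, hA₈, h₈⟩ := exists_abs_binomialExpect_relativeDeviation_pow_le hθ' 8
  have hθ₀ := hθ.1
  refine ⟨2 * A₆ + 2048 * θ * A₈ + A₅ / 5 + 1 / (4 * θ ^ 3), by positivity, ⌈1 / θ⌉₊ + 1,
    fun n hn => ?_⟩
  have hn₁ : 1 ≤ n := by omega
  have hμ : 1 ≤ θ * n := by
    have := (Nat.le_ceil (1 / θ)).trans (Nat.cast_le.2 (by omega : ⌈1 / θ⌉₊ ≤ n))
    rwa [div_le_iff₀ hθ₀, mul_comm] at this
  specialize h₅ n hn₁; specialize h₆ n hn₁; specialize h₈ n hn₁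
  norm_num at h₅ h₆ h₈
  rw [sum_Icc_choose_mul_log_eq_binomialExpect]
  refine (abs_binomialExpect_log_sub_expansion_le hθ hμ).trans ?_
  calc _ ≤ 2 * (A₆ / n ^ 3) + 2048 * (θ * n) * (A₈ / n ^ 4) + A₅ / n ^ 3 / 5 +
        1 / (4 * θ ^ 3 * n ^ 3) := by
        gcongr
        exacts [(le_abs_self _).trans h₆, (le_abs_self _).trans h₈]
    _ = _ := by field_simp

end
end

section
/- Fix p ∈ (0,1) and let q = 1−p. Then, as n → ∞, Σ_{|w|=n} Pr(w)·F(w) = H(p) − 1/(2n) + (pq−1)/(12·p·q·n²) + O(1/n³); that is, there exist C > 0 and N such that for all n ≥ N, |Σ_{|w|=n} Pr(w)·F(w) − H(p) + 1/(2n) − (pq−1)/(12 p q n²)| ≤ C/n³. -/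
open Finset Real

noncomputable section

/-- Binary entropy (natural logarithm). -/
def Hent (p : ℝ) : ℝ := -(p * Real.log p) - (1 - p) * Real.log (1 - p)

/-! ### Auxiliary machinery -/

lemma descProd (j a : ℕ) : ((a.descFactorial j : ℝ)) = ∏ i ∈ Finset.range j, ((a:ℝ) - i) := by
  rcases le_or_gt j a with h | h
  · rw [Nat.descFactorial_eq_prod_range]
    push_cast
    refine Finset.prod_congr rfl fun i hi => ?_
    exact Nat.cast_sub (le_of_lt (lt_of_lt_of_le (Finset.mem_range.1 hi) h))
  · rw [Nat.descFactorial_eq_zero_iff_lt.2 h,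
      Finset.prod_eq_zero (Finset.mem_range.2 h) (i := a) (by ring)]
    simp

lemma chooseShift {n j m : ℕ} (h : j + m ≤ n) :
    n.choose (j+m) * (j+m).descFactorial j = n.descFactorial j * (n-j).choose m := by
  rw [Nat.descFactorial_eq_factorial_mul_choose, Nat.descFactorial_eq_factorial_mul_choose]
  have hc := Nat.choose_mul (n := n) (k := j + m) (s := j) (Nat.le_add_right _ _)
  rw [Nat.add_sub_cancel_left] at hc
  rw [← mul_assoc, mul_comm (n.choose (j+m)) (Nat.factorial j), mul_assoc, hc]
  ring

lemma fallMoment (p : ℝ) {n j : ℕ} (hj : j ≤ n) :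
    ∑ k ∈ Finset.range (n+1), (n.choose k : ℝ) * p^k * (1-p)^(n-k) * (∏ i ∈ Finset.range j, ((k:ℝ) - i))
      = p^j * ∏ i ∈ Finset.range j, ((n:ℝ) - i) := by
  have key : ∀ k, (n.choose k : ℝ) * p^k * (1-p)^(n-k) * (∏ i ∈ Finset.range j, ((k:ℝ) - i))
      = (n.choose k : ℝ) * p^k * (1-p)^(n-k) * (k.descFactorial j : ℝ) := by
    intro k; rw [descProd]
  simp only [key]
  rw [Finset.range_eq_Ico, ← Finset.sum_Ico_consecutive _ (Nat.zero_le j) (by omega : j ≤ n+1)]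
  have h1 : ∑ k ∈ Finset.Ico 0 j, (n.choose k : ℝ) * p^k * (1-p)^(n-k) * (k.descFactorial j : ℝ) = 0 := by
    apply Finset.sum_eq_zero
    intro k hk
    rw [Nat.descFactorial_eq_zero_iff_lt.2 (Finset.mem_Ico.1 hk).2]
    simp
  rw [h1, zero_add, Finset.sum_Ico_eq_sum_range]
  have h2 : ∀ m ∈ Finset.range (n + 1 - j),
      (n.choose (j+m) : ℝ) * p^(j+m) * (1-p)^(n-(j+m)) * ((j+m).descFactorial j : ℝ)
      = (p^j * (n.descFactorial j : ℝ)) * (((n-j).choose m : ℝ) * p^m * (1-p)^((n-j)-m)) := by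
    intro m hm
    have hmn : j + m ≤ n := by have := Finset.mem_range.1 hm; omega
    have hcast : (n.choose (j+m) : ℝ) * ((j+m).descFactorial j : ℝ)
        = (n.descFactorial j : ℝ) * ((n-j).choose m : ℝ) := by
      exact_mod_cast congrArg (Nat.cast (R := ℝ)) (chooseShift hmn)
    have hsub : n - (j+m) = (n-j) - m := by omega
    rw [hsub, pow_add]
    linear_combination (p^j * p^m * (1-p)^((n-j)-m)) * hcast
  rw [Finset.sum_congr rfl h2, ← Finset.mul_sum]
  have h3 : n + 1 - j = (n - j) + 1 := by omega
  rw [h3]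
  have h4 : ∑ m ∈ Finset.range ((n-j)+1), (((n-j).choose m : ℝ) * p^m * (1-p)^((n-j)-m)) = 1 := by
    have h := add_pow (R := ℝ) p (1-p) (n-j)
    simp only [add_sub_cancel, one_pow] at h
    calc ∑ m ∈ Finset.range ((n-j)+1), (((n-j).choose m : ℝ) * p^m * (1-p)^((n-j)-m))
        = ∑ m ∈ Finset.range ((n-j)+1), p^m * (1-p)^((n-j)-m) * ((n-j).choose m : ℝ) :=
          Finset.sum_congr rfl fun m _ => by ring
      _ = 1 := h.symm
  rw [h4, mul_one, descProd, Finset.range_eq_Ico]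

def wEquiv (n : ℕ) : (Fin n → Bool) ≃ Finset (Fin n) where
  toFun w := Finset.univ.filter fun i => w i = true
  invFun s := fun i => decide (i ∈ s)
  left_inv w := by funext i; simp
  right_inv s := by ext i; simp

lemma sumWords {n : ℕ} (f : ℕ → ℝ) :
    ∑ w : Fin n → Bool, f (bwt w) = ∑ k ∈ Finset.range (n+1), (n.choose k : ℝ) * f k := by
  classical
  have h1 : ∑ w : Fin n → Bool, f (bwt w) = ∑ s : Finset (Fin n), f s.card :=
    Fintype.sum_bijective (wEquiv n) (wEquiv n).bijective
      (fun w : Fin n → Bool => f (bwt w)) (fun s => f s.card) (fun w => rfl)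
  rw [h1]
  have h2 : (Finset.univ : Finset (Finset (Fin n))) = (Finset.univ : Finset (Fin n)).powerset :=
    Finset.powerset_univ.symm
  rw [h2, Finset.sum_powerset]
  rw [Finset.card_univ, Fintype.card_fin]
  refine Finset.sum_congr rfl fun j hj => ?_
  have h3 : ∀ t ∈ Finset.powersetCard j (Finset.univ : Finset (Fin n)), f t.card = f j := by
    intro t ht
    rw [(Finset.mem_powersetCard.1 ht).2]
  rw [Finset.sum_congr rfl h3, Finset.sum_const, Finset.card_powersetCard, Finset.card_univ,
    Fintype.card_fin, nsmul_eq_mul]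

lemma sumWf (p : ℝ) {n : ℕ} (i : ℕ) (hi : i ≤ n) (g : ℝ → ℝ)
    (hg : ∀ x : ℝ, g x = ∏ l ∈ Finset.range i, (x - l)) :
    ∑ k ∈ Finset.range (n+1), (n.choose k : ℝ) * p^k * (1-p)^(n-k) * g (k:ℝ)
      = p^i * g (n:ℝ) := by
  calc ∑ k ∈ Finset.range (n+1), (n.choose k : ℝ) * p^k * (1-p)^(n-k) * g (k:ℝ)
      = ∑ k ∈ Finset.range (n+1), (n.choose k : ℝ) * p^k * (1-p)^(n-k) *
          (∏ l ∈ Finset.range i, ((k:ℝ) - l)) := Finset.sum_congr rfl fun k _ => by rw [hg]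
    _ = p^i * ∏ l ∈ Finset.range i, ((n:ℝ) - l) := fallMoment p hi
    _ = p^i * g (n:ℝ) := by rw [hg]

def c2 (p : ℝ) : ℝ := (1/p + 1/(1-p))/2
def c3 (p : ℝ) : ℝ := (1/(1-p)^2 - 1/p^2)/6
def c4 (p : ℝ) : ℝ := (1/p^3 + 1/(1-p)^3)/12
def c5 (p : ℝ) : ℝ := (1/(1-p)^4 - 1/p^4)/20
def dd6 (p : ℝ) : ℝ := 1/(5*p^5) + 1/(5*(1-p)^5)
def KK (p : ℝ) : ℝ := dd6 p + 2/p^6 + 2/(1-p)^6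
def BB (p : ℝ) : ℝ := 2 + |Hent p| + |Real.log p - Real.log (1-p)| + |c2 p| + |c3 p| + |c4 p| + |c5 p|
def del (p : ℝ) : ℝ := min p (1-p) / 2
def Lam (p : ℝ) : ℝ := KK p + BB p / (del p)^6
def Gfun (p u : ℝ) : ℝ :=
  Hent p - u * (Real.log p - Real.log (1-p)) - c2 p * u^2 - c3 p * u^3 - c4 p * u^4 - c5 p * u^5

lemma absxlogx {x : ℝ} (h0 : 0 ≤ x) (h1 : x ≤ 1) : |x * Real.log x| ≤ 1 := by
  rcases eq_or_lt_of_le h0 with h | h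
  · simp [← h]
  · have hlog : Real.log x ≤ 0 := Real.log_nonpos h0 h1
    have hinv : Real.log x⁻¹ ≤ x⁻¹ - 1 := Real.log_le_sub_one_of_pos (by positivity)
    have hneg : -(x * Real.log x) = x * Real.log x⁻¹ := by rw [Real.log_inv]; ring
    have h2 : x * Real.log x⁻¹ ≤ x * (x⁻¹ - 1) := by
      apply mul_le_mul_of_nonneg_left hinv h0
    have h3 : x * (x⁻¹ - 1) = 1 - x := by field_simp
    have h4 : 0 ≤ -(x * Real.log x) := by nlinarith
    rw [abs_of_nonpos (by nlinarith : x * Real.log x ≤ 0)]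
    nlinarith

lemma logExpand {y : ℝ} (hy : |y| ≤ 1/2) :
    ∃ E : ℝ, Real.log (1 - y) = -(y + y^2/2 + y^3/3 + y^4/4 + y^5/5) + E ∧ |E| ≤ 2 * |y|^6 := by
  have h1 : |y| < 1 := lt_of_le_of_lt hy (by norm_num)
  have key := Real.abs_log_sub_add_sum_range_le h1 5
  refine ⟨(∑ i ∈ Finset.range 5, y^(i+1)/(i+1)) + Real.log (1 - y), ?_, ?_⟩
  · have hs : (∑ i ∈ Finset.range 5, y^(i+1)/((i:ℝ)+1)) = y + y^2/2 + y^3/3 + y^4/4 + y^5/5 := by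
      simp [Finset.sum_range_succ]
      norm_num
    rw [hs]; ring
  · refine le_trans key ?_
    have h2 : 1 - |y| ≥ 1/2 := by linarith
    have h3 : |y|^6 ≥ 0 := by positivity
    calc |y|^(5+1) / (1 - |y|) ≤ |y|^6 / (1/2) := by
          apply div_le_div_of_nonneg_left h3 (by norm_num) h2
      _ = 2 * |y|^6 := by ring

set_option maxHeartbeats 1000000 in
lemma pointwiseX (p : ℝ) (hp0 : 0 < p) (hp1 : p < 1) (x : ℝ) (hx0 : 0 ≤ x) (hx1 : x ≤ 1) :
    |(-x * Real.log x - (1-x) * Real.log (1-x)) - Gfun p (x - p)| ≤ Lam p * (x - p)^6 := by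
  have hq0 : (0:ℝ) < 1 - p := by linarith
  obtain ⟨u, rfl⟩ : ∃ u, x = p + u := ⟨x - p, by ring⟩
  rw [add_sub_cancel_left]
  have hx0' : 0 ≤ p + u := hx0
  have hx1' : p + u ≤ 1 := hx1
  have hδ0 : 0 < del p := by
    unfold del
    have : 0 < min p (1-p) := lt_min hp0 hq0
    linarith
  have hδp : del p ≤ p/2 := by
    unfold del; have : min p (1-p) ≤ p := min_le_left _ _; linarith
  have hδq : del p ≤ (1-p)/2 := by
    unfold del; have : min p (1-p) ≤ 1-p := min_le_right _ _; linarith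
  have hu6 : (0:ℝ) ≤ u^6 := by positivity
  have hKK : 0 ≤ KK p := by unfold KK dd6; positivity
  have hBB : 0 ≤ BB p := by unfold BB; positivity
  rcases le_or_gt |u| (del p) with hbulk | htail
  · -- bulk case
    have habs := abs_le.1 hbulk
    have hxpos : 0 < p + u := by linarith [hδp]
    have h1xpos : 0 < 1 - (p + u) := by linarith [hδq]
    have hy1 : |(-u/p)| ≤ 1/2 := by
      rw [abs_div, abs_neg, abs_of_pos hp0, div_le_iff₀ hp0]
      calc |u| ≤ del p := hbulk
        _ ≤ 1/2 * p := by linarith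
    have hy2 : |u/(1-p)| ≤ 1/2 := by
      rw [abs_div, abs_of_pos hq0, div_le_iff₀ hq0]
      calc |u| ≤ del p := hbulk
        _ ≤ 1/2 * (1-p) := by linarith
    obtain ⟨E1, hE1eq, hE1le⟩ := logExpand hy1
    obtain ⟨E2, hE2eq, hE2le⟩ := logExpand hy2
    have hlogx : Real.log (p + u) = Real.log p + Real.log (1 - (-u/p)) := by
      have hxy : p + u = p * (1 - (-u/p)) := by field_simp; ring
      rw [hxy, Real.log_mul hp0.ne' (by intro h; rw [h, mul_zero] at hxy; linarith)]
    have hlog1x : Real.log (1 - (p + u)) = Real.log (1-p) + Real.log (1 - (u/(1-p))) := by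
      have hxy : 1 - (p + u) = (1-p) * (1 - u/(1-p)) := by field_simp; ring
      rw [hxy, Real.log_mul hq0.ne' (by intro h; rw [h, mul_zero] at hxy; linarith)]
    have hid : (-(p+u) * Real.log (p+u) - (1-(p+u)) * Real.log (1-(p+u))) - Gfun p u
        = -(dd6 p) * u^6 - (p+u)*E1 - (1-(p+u))*E2 := by
      rw [hlogx, hlog1x, hE1eq, hE2eq]
      have hpoly : (p+u) * ((-u/p) + (-u/p)^2/2 + (-u/p)^3/3 + (-u/p)^4/4 + (-u/p)^5/5)
          + (1-(p+u)) * ((u/(1-p)) + (u/(1-p))^2/2 + (u/(1-p))^3/3 + (u/(1-p))^4/4 + (u/(1-p))^5/5)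
          + c2 p * u^2 + c3 p * u^3 + c4 p * u^4 + c5 p * u^5
          = -(dd6 p) * u^6 := by
        simp only [c2, c3, c4, c5, dd6]
        field_simp
        ring
      simp only [Gfun, Hent]
      linear_combination hpoly
    rw [hid]
    have hd6 : 0 ≤ dd6 p := by unfold dd6; positivity
    have hy16 : |(-u/p)|^6 = u^6/p^6 := by
      rw [abs_div, abs_neg, abs_of_pos hp0, div_pow, ← abs_pow]
      rw [abs_of_nonneg hu6]
    have hy26 : |u/(1-p)|^6 = u^6/(1-p)^6 := by
      rw [abs_div, abs_of_pos hq0, div_pow, ← abs_pow]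
      rw [abs_of_nonneg hu6]
    have hE1le' : |E1| ≤ 2 * (u^6/p^6) := by rw [← hy16]; exact hE1le
    have hE2le' : |E2| ≤ 2 * (u^6/(1-p)^6) := by rw [← hy26]; exact hE2le
    have step : |(-(dd6 p) * u^6 - (p+u)*E1 - (1-(p+u))*E2)|
        ≤ dd6 p * u^6 + (p+u)*|E1| + (1-(p+u))*|E2| := by
      calc |(-(dd6 p) * u^6 - (p+u)*E1 - (1-(p+u))*E2)|
          ≤ |(-(dd6 p) * u^6 - (p+u)*E1)| + |(1-(p+u))*E2| := abs_sub _ _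
        _ ≤ |(-(dd6 p) * u^6)| + |(p+u)*E1| + |(1-(p+u))*E2| := by
            linarith [abs_sub (-(dd6 p) * u^6) ((p+u)*E1)]
        _ = dd6 p * u^6 + (p+u)*|E1| + (1-(p+u))*|E2| := by
            rw [abs_mul, abs_mul, abs_mul, abs_neg, abs_of_nonneg hd6, abs_of_nonneg hu6,
              abs_of_pos hxpos, abs_of_pos h1xpos]
    refine le_trans step ?_
    have b1 : (p+u)*|E1| ≤ 2 * (u^6/p^6) := by
      calc (p+u)*|E1| ≤ 1*|E1| := mul_le_mul_of_nonneg_right (by linarith) (abs_nonneg _)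
        _ = |E1| := one_mul _
        _ ≤ 2 * (u^6/p^6) := hE1le'
    have b2 : (1-(p+u))*|E2| ≤ 2 * (u^6/(1-p)^6) := by
      calc (1-(p+u))*|E2| ≤ 1*|E2| := mul_le_mul_of_nonneg_right (by linarith) (abs_nonneg _)
        _ = |E2| := one_mul _
        _ ≤ 2 * (u^6/(1-p)^6) := hE2le'
    have hKLam : KK p * u^6 ≤ Lam p * u^6 := by
      apply mul_le_mul_of_nonneg_right _ hu6
      unfold Lam
      have : 0 ≤ BB p / (del p)^6 := by positivity
      linarith
    refine le_trans ?_ hKLam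
    unfold KK
    have e1 : 2/p^6 * u^6 = 2 * (u^6/p^6) := by ring
    have e2 : 2/(1-p)^6 * u^6 = 2 * (u^6/(1-p)^6) := by ring
    nlinarith [b1, b2]
  · -- tail case
    have hu1 : |u| ≤ 1 := by
      rw [abs_le]; constructor <;> linarith
    have hφ : |(-(p+u) * Real.log (p+u) - (1-(p+u)) * Real.log (1-(p+u)))| ≤ 2 := by
      have t1 : |(p+u) * Real.log (p+u)| ≤ 1 := absxlogx hx0 hx1
      have t2 : |(1-(p+u)) * Real.log (1-(p+u))| ≤ 1 := absxlogx (by linarith) (by linarith)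
      calc |(-(p+u) * Real.log (p+u) - (1-(p+u)) * Real.log (1-(p+u)))|
          ≤ |(-(p+u) * Real.log (p+u))| + |(1-(p+u)) * Real.log (1-(p+u))| := abs_sub _ _
        _ = |(p+u) * Real.log (p+u)| + |(1-(p+u)) * Real.log (1-(p+u))| := by
            rw [← abs_neg (-(p+u) * Real.log (p+u))]; ring_nf
        _ ≤ 2 := by linarith
    have hG : |Gfun p u| ≤ BB p - 2 := by
      unfold Gfun BB
      have a0 : |Hent p - u * (Real.log p - Real.log (1-p)) - c2 p * u^2 - c3 p * u^3
          - c4 p * u^4 - c5 p * u^5|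
          ≤ |Hent p| + |u * (Real.log p - Real.log (1-p))| + |c2 p * u^2| + |c3 p * u^3|
            + |c4 p * u^4| + |c5 p * u^5| := by
        have s1 := abs_sub (Hent p - u * (Real.log p - Real.log (1-p)) - c2 p * u^2
          - c3 p * u^3 - c4 p * u^4) (c5 p * u^5)
        have s2 := abs_sub (Hent p - u * (Real.log p - Real.log (1-p)) - c2 p * u^2
          - c3 p * u^3) (c4 p * u^4)
        have s3 := abs_sub (Hent p - u * (Real.log p - Real.log (1-p)) - c2 p * u^2) (c3 p * u^3)
        have s4 := abs_sub (Hent p - u * (Real.log p - Real.log (1-p))) (c2 p * u^2)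
        have s5 := abs_sub (Hent p) (u * (Real.log p - Real.log (1-p)))
        linarith
      have powle : ∀ m : ℕ, 1 ≤ m → |u|^m ≤ 1 := fun m hm =>
        pow_le_one₀ (abs_nonneg u) hu1
      have b1 : |u * (Real.log p - Real.log (1-p))| ≤ |Real.log p - Real.log (1-p)| := by
        rw [abs_mul]
        exact mul_le_of_le_one_left (abs_nonneg _) hu1
      have b2 : |c2 p * u^2| ≤ |c2 p| := by
        rw [abs_mul, abs_pow]
        exact mul_le_of_le_one_right (abs_nonneg _) (powle 2 (by norm_num))
      have b3 : |c3 p * u^3| ≤ |c3 p| := by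
        rw [abs_mul, abs_pow]
        exact mul_le_of_le_one_right (abs_nonneg _) (powle 3 (by norm_num))
      have b4 : |c4 p * u^4| ≤ |c4 p| := by
        rw [abs_mul, abs_pow]
        exact mul_le_of_le_one_right (abs_nonneg _) (powle 4 (by norm_num))
      have b5 : |c5 p * u^5| ≤ |c5 p| := by
        rw [abs_mul, abs_pow]
        exact mul_le_of_le_one_right (abs_nonneg _) (powle 5 (by norm_num))
      linarith
    have hδ6 : (del p)^6 ≤ u^6 := by
      calc (del p)^6 ≤ |u|^6 := pow_le_pow_left₀ hδ0.le htail.le 6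
        _ = u^6 := by rw [← abs_pow, abs_of_nonneg hu6]
    have htot : |(-(p+u) * Real.log (p+u) - (1-(p+u)) * Real.log (1-(p+u))) - Gfun p u|
        ≤ BB p := by
      calc |(-(p+u) * Real.log (p+u) - (1-(p+u)) * Real.log (1-(p+u))) - Gfun p u|
          ≤ |(-(p+u) * Real.log (p+u) - (1-(p+u)) * Real.log (1-(p+u)))| + |Gfun p u| :=
            abs_sub _ _
        _ ≤ 2 + (BB p - 2) := by linarith
        _ = BB p := by ring
    refine le_trans htot ?_
    have hBd : BB p = (BB p / (del p)^6) * (del p)^6 := by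
      field_simp
    calc BB p = (BB p / (del p)^6) * (del p)^6 := hBd
      _ ≤ (BB p / (del p)^6) * u^6 := by
          apply mul_le_mul_of_nonneg_left hδ6 (by positivity)
      _ ≤ Lam p * u^6 := by
          apply mul_le_mul_of_nonneg_right _ hu6
          unfold Lam; linarith
lemma centralMoments (p : ℝ) {n : ℕ} (hn : 6 ≤ n) :
    (∑ k ∈ Finset.range (n+1), (n.choose k : ℝ) * p^k * (1-p)^(n-k) * ((k:ℝ) - (n:ℝ)*p)^1 = 0) ∧
    (∑ k ∈ Finset.range (n+1), (n.choose k : ℝ) * p^k * (1-p)^(n-k) * ((k:ℝ) - (n:ℝ)*p)^2 = (n:ℝ)*(p*(1-p))) ∧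
    (∑ k ∈ Finset.range (n+1), (n.choose k : ℝ) * p^k * (1-p)^(n-k) * ((k:ℝ) - (n:ℝ)*p)^3 = (n:ℝ)*(p*(1-p))*(1-2*p)) ∧
    (∑ k ∈ Finset.range (n+1), (n.choose k : ℝ) * p^k * (1-p)^(n-k) * ((k:ℝ) - (n:ℝ)*p)^4 = 3*(n:ℝ)^2*(p*(1-p))^2 + (n:ℝ)*(p*(1-p))*(1-6*(p*(1-p)))) ∧
    (∑ k ∈ Finset.range (n+1), (n.choose k : ℝ) * p^k * (1-p)^(n-k) * ((k:ℝ) - (n:ℝ)*p)^5 = 10*(n:ℝ)^2*(p*(1-p))^2*(1-2*p) + (n:ℝ)*(p*(1-p))*(1-2*p)*(1-12*(p*(1-p)))) ∧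
    (∑ k ∈ Finset.range (n+1), (n.choose k : ℝ) * p^k * (1-p)^(n-k) * ((k:ℝ) - (n:ℝ)*p)^6 = 15*(n:ℝ)^3*(p*(1-p))^3 + (n:ℝ)^2*(p*(1-p))^2*(25-130*(p*(1-p))) + (n:ℝ)*(p*(1-p))*(1-30*(p*(1-p))+120*(p*(1-p))^2)) := by
  have G0 : (∑ k ∈ Finset.range (n+1), (n.choose k : ℝ) * p^k * (1-p)^(n-k) * (1)) = p^0 * (1) :=
    sumWf p 0 (by omega) (fun x => 1) (fun x => by simp)
  have G1 : (∑ k ∈ Finset.range (n+1), (n.choose k : ℝ) * p^k * (1-p)^(n-k) * ((k:ℝ))) = p^1 * ((n:ℝ)) :=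
    sumWf p 1 (by omega) (fun x => x) (fun x => by simp only [Finset.prod_range_succ, Finset.prod_range_zero]; push_cast; ring)
  have G2 : (∑ k ∈ Finset.range (n+1), (n.choose k : ℝ) * p^k * (1-p)^(n-k) * ((k:ℝ)*((k:ℝ)-1))) = p^2 * ((n:ℝ)*((n:ℝ)-1)) :=
    sumWf p 2 (by omega) (fun x => x*(x-1)) (fun x => by simp only [Finset.prod_range_succ, Finset.prod_range_zero]; push_cast; ring)
  have G3 : (∑ k ∈ Finset.range (n+1), (n.choose k : ℝ) * p^k * (1-p)^(n-k) * ((k:ℝ)*((k:ℝ)-1)*((k:ℝ)-2))) = p^3 * ((n:ℝ)*((n:ℝ)-1)*((n:ℝ)-2)) :=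
    sumWf p 3 (by omega) (fun x => x*(x-1)*(x-2)) (fun x => by simp only [Finset.prod_range_succ, Finset.prod_range_zero]; push_cast; ring)
  have G4 : (∑ k ∈ Finset.range (n+1), (n.choose k : ℝ) * p^k * (1-p)^(n-k) * ((k:ℝ)*((k:ℝ)-1)*((k:ℝ)-2)*((k:ℝ)-3))) = p^4 * ((n:ℝ)*((n:ℝ)-1)*((n:ℝ)-2)*((n:ℝ)-3)) :=
    sumWf p 4 (by omega) (fun x => x*(x-1)*(x-2)*(x-3)) (fun x => by simp only [Finset.prod_range_succ, Finset.prod_range_zero]; push_cast; ring)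
  have G5 : (∑ k ∈ Finset.range (n+1), (n.choose k : ℝ) * p^k * (1-p)^(n-k) * ((k:ℝ)*((k:ℝ)-1)*((k:ℝ)-2)*((k:ℝ)-3)*((k:ℝ)-4))) = p^5 * ((n:ℝ)*((n:ℝ)-1)*((n:ℝ)-2)*((n:ℝ)-3)*((n:ℝ)-4)) :=
    sumWf p 5 (by omega) (fun x => x*(x-1)*(x-2)*(x-3)*(x-4)) (fun x => by simp only [Finset.prod_range_succ, Finset.prod_range_zero]; push_cast; ring)
  have G6 : (∑ k ∈ Finset.range (n+1), (n.choose k : ℝ) * p^k * (1-p)^(n-k) * ((k:ℝ)*((k:ℝ)-1)*((k:ℝ)-2)*((k:ℝ)-3)*((k:ℝ)-4)*((k:ℝ)-5))) = p^6 * ((n:ℝ)*((n:ℝ)-1)*((n:ℝ)-2)*((n:ℝ)-3)*((n:ℝ)-4)*((n:ℝ)-5)) :=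
    sumWf p 6 (by omega) (fun x => x*(x-1)*(x-2)*(x-3)*(x-4)*(x-5)) (fun x => by simp only [Finset.prod_range_succ, Finset.prod_range_zero]; push_cast; ring)
  refine ⟨?_, ?_, ?_, ?_, ?_, ?_⟩
  · calc ∑ k ∈ Finset.range (n+1), (n.choose k : ℝ) * p^k * (1-p)^(n-k) * ((k:ℝ) - (n:ℝ)*p)^1
        = ∑ k ∈ Finset.range (n+1), (((-1)*((n:ℝ)*p) : ℝ) * ((n.choose k : ℝ) * p^k * (1-p)^(n-k) * (1)) + ((1) : ℝ) * ((n.choose k : ℝ) * p^k * (1-p)^(n-k) * ((k:ℝ)))) := Finset.sum_congr rfl fun k _ => by push_cast; ring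
      _ = 0 := by
          simp only [Finset.sum_add_distrib, ← Finset.mul_sum]
          rw [G0, G1]; ring
  · calc ∑ k ∈ Finset.range (n+1), (n.choose k : ℝ) * p^k * (1-p)^(n-k) * ((k:ℝ) - (n:ℝ)*p)^2
        = ∑ k ∈ Finset.range (n+1), (((1)*((n:ℝ)*p)^2 : ℝ) * ((n.choose k : ℝ) * p^k * (1-p)^(n-k) * (1)) + ((-2)*((n:ℝ)*p) + (1) : ℝ) * ((n.choose k : ℝ) * p^k * (1-p)^(n-k) * ((k:ℝ))) + ((1) : ℝ) * ((n.choose k : ℝ) * p^k * (1-p)^(n-k) * ((k:ℝ)*((k:ℝ)-1)))) := Finset.sum_congr rfl fun k _ => by push_cast; ring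
      _ = (n:ℝ)*(p*(1-p)) := by
          simp only [Finset.sum_add_distrib, ← Finset.mul_sum]
          rw [G0, G1, G2]; ring
  · calc ∑ k ∈ Finset.range (n+1), (n.choose k : ℝ) * p^k * (1-p)^(n-k) * ((k:ℝ) - (n:ℝ)*p)^3
        = ∑ k ∈ Finset.range (n+1), (((-1)*((n:ℝ)*p)^3 : ℝ) * ((n.choose k : ℝ) * p^k * (1-p)^(n-k) * (1)) + ((3)*((n:ℝ)*p)^2 + (-3)*((n:ℝ)*p) + (1) : ℝ) * ((n.choose k : ℝ) * p^k * (1-p)^(n-k) * ((k:ℝ))) + ((-3)*((n:ℝ)*p) + (3) : ℝ) * ((n.choose k : ℝ) * p^k * (1-p)^(n-k) * ((k:ℝ)*((k:ℝ)-1))) + ((1) : ℝ) * ((n.choose k : ℝ) * p^k * (1-p)^(n-k) * ((k:ℝ)*((k:ℝ)-1)*((k:ℝ)-2)))) := Finset.sum_congr rfl fun k _ => by push_cast; ring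
      _ = (n:ℝ)*(p*(1-p))*(1-2*p) := by
          simp only [Finset.sum_add_distrib, ← Finset.mul_sum]
          rw [G0, G1, G2, G3]; ring
  · calc ∑ k ∈ Finset.range (n+1), (n.choose k : ℝ) * p^k * (1-p)^(n-k) * ((k:ℝ) - (n:ℝ)*p)^4
        = ∑ k ∈ Finset.range (n+1), (((1)*((n:ℝ)*p)^4 : ℝ) * ((n.choose k : ℝ) * p^k * (1-p)^(n-k) * (1)) + ((-4)*((n:ℝ)*p)^3 + (6)*((n:ℝ)*p)^2 + (-4)*((n:ℝ)*p) + (1) : ℝ) * ((n.choose k : ℝ) * p^k * (1-p)^(n-k) * ((k:ℝ))) + ((6)*((n:ℝ)*p)^2 + (-12)*((n:ℝ)*p) + (7) : ℝ) * ((n.choose k : ℝ) * p^k * (1-p)^(n-k) * ((k:ℝ)*((k:ℝ)-1))) + ((-4)*((n:ℝ)*p) + (6) : ℝ) * ((n.choose k : ℝ) * p^k * (1-p)^(n-k) * ((k:ℝ)*((k:ℝ)-1)*((k:ℝ)-2))) + ((1) : ℝ) * ((n.choose k : ℝ) * p^k * (1-p)^(n-k) * ((k:ℝ)*((k:ℝ)-1)*((k:ℝ)-2)*((k:ℝ)-3))))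 := Finset.sum_congr rfl fun k _ => by push_cast; ring
      _ = 3*(n:ℝ)^2*(p*(1-p))^2 + (n:ℝ)*(p*(1-p))*(1-6*(p*(1-p))) := by
          simp only [Finset.sum_add_distrib, ← Finset.mul_sum]
          rw [G0, G1, G2, G3, G4]; ring
  · calc ∑ k ∈ Finset.range (n+1), (n.choose k : ℝ) * p^k * (1-p)^(n-k) * ((k:ℝ) - (n:ℝ)*p)^5
        = ∑ k ∈ Finset.range (n+1), (((-1)*((n:ℝ)*p)^5 : ℝ) * ((n.choose k : ℝ) * p^k * (1-p)^(n-k) * (1)) + ((5)*((n:ℝ)*p)^4 + (-10)*((n:ℝ)*p)^3 + (10)*((n:ℝ)*p)^2 + (-5)*((n:ℝ)*p) + (1) : ℝ) * ((n.choose k : ℝ) * p^k * (1-p)^(n-k) * ((k:ℝ))) + ((-10)*((n:ℝ)*p)^3 + (30)*((n:ℝ)*p)^2 + (-35)*((n:ℝ)*p) + (15) : ℝ) * ((n.choose k : ℝ) * p^k * (1-p)^(n-k) * ((k:ℝ)*((k:ℝ)-1))) + ((10)*((n:ℝ)*p)^2 + (-30)*((n:ℝ)*p) + (25) : ℝ)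 * ((n.choose k : ℝ) * p^k * (1-p)^(n-k) * ((k:ℝ)*((k:ℝ)-1)*((k:ℝ)-2))) + ((-5)*((n:ℝ)*p) + (10) : ℝ) * ((n.choose k : ℝ) * p^k * (1-p)^(n-k) * ((k:ℝ)*((k:ℝ)-1)*((k:ℝ)-2)*((k:ℝ)-3))) + ((1) : ℝ) * ((n.choose k : ℝ) * p^k * (1-p)^(n-k) * ((k:ℝ)*((k:ℝ)-1)*((k:ℝ)-2)*((k:ℝ)-3)*((k:ℝ)-4)))) := Finset.sum_congr rfl fun k _ => by push_cast; ring
      _ = 10*(n:ℝ)^2*(p*(1-p))^2*(1-2*p) + (n:ℝ)*(p*(1-p))*(1-2*p)*(1-12*(p*(1-p))) := by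
          simp only [Finset.sum_add_distrib, ← Finset.mul_sum]
          rw [G0, G1, G2, G3, G4, G5]; ring
  · calc ∑ k ∈ Finset.range (n+1), (n.choose k : ℝ) * p^k * (1-p)^(n-k) * ((k:ℝ) - (n:ℝ)*p)^6
        = ∑ k ∈ Finset.range (n+1), (((1)*((n:ℝ)*p)^6 : ℝ) * ((n.choose k : ℝ) * p^k * (1-p)^(n-k) * (1)) + ((-6)*((n:ℝ)*p)^5 + (15)*((n:ℝ)*p)^4 + (-20)*((n:ℝ)*p)^3 + (15)*((n:ℝ)*p)^2 + (-6)*((n:ℝ)*p) + (1) : ℝ) * ((n.choose k : ℝ) * p^k * (1-p)^(n-k) * ((k:ℝ))) + ((15)*((n:ℝ)*p)^4 + (-60)*((n:ℝ)*p)^3 + (105)*((n:ℝ)*p)^2 + (-90)*((n:ℝ)*p) + (31) : ℝ) * ((n.choose k : ℝ) * p^k * (1-p)^(n-k) * ((k:ℝ)*((k:ℝ)-1))) + ((-20)*((n:ℝ)*p)^3 + (90)*((n:ℝ)*p)^2 + (-150)*((n:ℝ)*p) + (90) : ℝ) * ((n.choose k : ℝ) * p^k * (1-p)^(n-k) * ((k:ℝ)*((k:ℝ)-1)*((k:ℝ)-2)))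 + ((15)*((n:ℝ)*p)^2 + (-60)*((n:ℝ)*p) + (65) : ℝ) * ((n.choose k : ℝ) * p^k * (1-p)^(n-k) * ((k:ℝ)*((k:ℝ)-1)*((k:ℝ)-2)*((k:ℝ)-3))) + ((-6)*((n:ℝ)*p) + (15) : ℝ) * ((n.choose k : ℝ) * p^k * (1-p)^(n-k) * ((k:ℝ)*((k:ℝ)-1)*((k:ℝ)-2)*((k:ℝ)-3)*((k:ℝ)-4))) + ((1) : ℝ) * ((n.choose k : ℝ) * p^k * (1-p)^(n-k) * ((k:ℝ)*((k:ℝ)-1)*((k:ℝ)-2)*((k:ℝ)-3)*((k:ℝ)-4)*((k:ℝ)-5)))) := Finset.sum_congr rfl fun k _ => by push_cast; ring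
      _ = 15*(n:ℝ)^3*(p*(1-p))^3 + (n:ℝ)^2*(p*(1-p))^2*(25-130*(p*(1-p))) + (n:ℝ)*(p*(1-p))*(1-30*(p*(1-p))+120*(p*(1-p))^2) := by
          simp only [Finset.sum_add_distrib, ← Finset.mul_sum]
          rw [G0, G1, G2, G3, G4, G5, G6]; ring


set_option maxHeartbeats 4000000 in
/-- asymptotics of the average empirical entropy:
`Σ_{|w|=n} Pr(w)F(w) = H(p) − 1/(2n) + (pq−1)/(12pqn²) + O(1/n³)`. -/
theorem stmt_13 (p q : ℝ) (hp : p ∈ Set.Ioo (0 : ℝ) 1) (hq : q = 1 - p) :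
    ∃ C : ℝ, 0 < C ∧ ∃ N : ℕ, ∀ n : ℕ, N ≤ n →
      |(∑ w : Fin n → Bool, prW p w * Femp w) - Hent p + 1 / (2 * (n : ℝ)) -
          (p * q - 1) / (12 * p * q * (n : ℝ) ^ 2)| ≤ C / (n : ℝ) ^ 3 := by
  obtain ⟨hp0, hp1⟩ := hp
  subst hq
  have hq0 : (0:ℝ) < 1 - p := by linarith
  have hδ0 : 0 < del p := by
    unfold del
    have : 0 < min p (1-p) := lt_min hp0 hq0
    linarith
  have hKK : 0 ≤ KK p := by unfold KK dd6; positivity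
  have hBB : 0 ≤ BB p := by unfold BB; positivity
  have hLam : 0 ≤ Lam p := by
    unfold Lam
    have : 0 ≤ BB p / (del p)^6 := by positivity
    linarith
  set ee1 : ℝ := -(c4 p * ((p*(1-p))*(1-6*(p*(1-p))))) - c5 p * (10*(p*(1-p))^2*(1-2*p)) with hee1
  set ee2 : ℝ := -(c5 p * ((p*(1-p))*(1-2*p)*(1-12*(p*(1-p))))) with hee2
  set A6 : ℝ := 15*(p*(1-p))^3 + |(p*(1-p))^2*(25-130*(p*(1-p)))|
      + |(p*(1-p))*(1-30*(p*(1-p))+120*(p*(1-p))^2)| with hA6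
  have hA60 : 0 ≤ A6 := by rw [hA6]; positivity
  refine ⟨|ee1| + |ee2| + Lam p * A6 + 1, by positivity, 6, fun n hn => ?_⟩
  have hn0 : 0 < n := by omega
  have hn6 : 6 ≤ n := hn
  have hnne : ((n:ℝ)) ≠ 0 := Nat.cast_ne_zero.2 (by omega)
  have hnpos : (0:ℝ) < n := by exact_mod_cast hn0
  have hn1 : (1:ℝ) ≤ n := by exact_mod_cast hn0
  -- Step 1: word sum to weight sum
  have hws : ∑ w : Fin n → Bool, prW p w * Femp w
      = ∑ k ∈ Finset.range (n+1), (n.choose k : ℝ) * (p^k * (1-p)^(n-k) *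
          (-((k:ℝ)/n) * Real.log ((k:ℝ)/n) - (((n:ℝ)-k)/n) * Real.log (((n:ℝ)-k)/n))) :=
    sumWords (fun k => p^k * (1-p)^(n-k) *
      (-((k:ℝ)/n) * Real.log ((k:ℝ)/n) - (((n:ℝ)-k)/n) * Real.log (((n:ℝ)-k)/n)))
  have hws2 : ∑ w : Fin n → Bool, prW p w * Femp w
      = ∑ k ∈ Finset.range (n+1), (n.choose k : ℝ) * p^k * (1-p)^(n-k) *
          (-((k:ℝ)/n) * Real.log ((k:ℝ)/n) - (((n:ℝ)-k)/n) * Real.log (((n:ℝ)-k)/n)) := by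
    rw [hws]
    exact Finset.sum_congr rfl fun k _ => by ring
  rw [hws2]
  -- notation
  obtain ⟨cm1, cm2, cm3, cm4, cm5, cm6⟩ := centralMoments p hn6
  have hone : (∑ k ∈ Finset.range (n+1), (n.choose k : ℝ) * p^k * (1-p)^(n-k) * (1)) = p^0 * (1) :=
    sumWf p 0 (by omega) (fun x => 1) (fun x => by simp)
  -- Step 2: the Gfun part of the sum
  have hSG : (∑ k ∈ Finset.range (n+1), (n.choose k : ℝ) * p^k * (1-p)^(n-k) *
        Gfun p ((k:ℝ)/n - p))
      = Hent p - c2 p * ((p*(1-p))/(n:ℝ))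
        - c3 p * ((p*(1-p))*(1-2*p)/(n:ℝ)^2)
        - c4 p * ((3*(n:ℝ)^2*(p*(1-p))^2 + (n:ℝ)*(p*(1-p))*(1-6*(p*(1-p))))/(n:ℝ)^4)
        - c5 p * ((10*(n:ℝ)^2*(p*(1-p))^2*(1-2*p)
            + (n:ℝ)*(p*(1-p))*(1-2*p)*(1-12*(p*(1-p))))/(n:ℝ)^5) := by
    have expand : ∀ k ∈ Finset.range (n+1),
        (n.choose k : ℝ) * p^k * (1-p)^(n-k) * Gfun p ((k:ℝ)/n - p)
        = Hent p * ((n.choose k : ℝ) * p^k * (1-p)^(n-k) * (1))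
          - ((Real.log p - Real.log (1-p)) * ((n:ℝ)⁻¹)) *
              ((n.choose k : ℝ) * p^k * (1-p)^(n-k) * ((k:ℝ) - (n:ℝ)*p)^1)
          - (c2 p * ((n:ℝ)⁻¹)^2) *
              ((n.choose k : ℝ) * p^k * (1-p)^(n-k) * ((k:ℝ) - (n:ℝ)*p)^2)
          - (c3 p * ((n:ℝ)⁻¹)^3) *
              ((n.choose k : ℝ) * p^k * (1-p)^(n-k) * ((k:ℝ) - (n:ℝ)*p)^3)
          - (c4 p * ((n:ℝ)⁻¹)^4) *
              ((n.choose k : ℝ) * p^k * (1-p)^(n-k) * ((k:ℝ) - (n:ℝ)*p)^4)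
          - (c5 p * ((n:ℝ)⁻¹)^5) *
              ((n.choose k : ℝ) * p^k * (1-p)^(n-k) * ((k:ℝ) - (n:ℝ)*p)^5) := by
      intro k _
      rw [show (k:ℝ)/n - p = ((k:ℝ) - (n:ℝ)*p) * ((n:ℝ)⁻¹) by field_simp]
      simp only [Gfun]
      ring
    rw [Finset.sum_congr rfl expand]
    simp only [Finset.sum_sub_distrib, ← Finset.mul_sum]
    rw [hone, cm1, cm2, cm3, cm4, cm5]
    field_simp
    ring
  -- Step 3: the error sum
  have hW0 : ∀ k, 0 ≤ (n.choose k : ℝ) * p^k * (1-p)^(n-k) := by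
    intro k; positivity
  have herr : |(∑ k ∈ Finset.range (n+1), (n.choose k : ℝ) * p^k * (1-p)^(n-k) *
          (-((k:ℝ)/n) * Real.log ((k:ℝ)/n) - (((n:ℝ)-k)/n) * Real.log (((n:ℝ)-k)/n)))
        - (∑ k ∈ Finset.range (n+1), (n.choose k : ℝ) * p^k * (1-p)^(n-k) *
          Gfun p ((k:ℝ)/n - p))| ≤ Lam p * (A6 / (n:ℝ)^3) := by
    rw [← Finset.sum_sub_distrib]
    have hterm : ∀ k ∈ Finset.range (n+1),
        |(n.choose k : ℝ) * p^k * (1-p)^(n-k) *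
          (-((k:ℝ)/n) * Real.log ((k:ℝ)/n) - (((n:ℝ)-k)/n) * Real.log (((n:ℝ)-k)/n))
        - (n.choose k : ℝ) * p^k * (1-p)^(n-k) * Gfun p ((k:ℝ)/n - p)|
        ≤ (Lam p * ((n:ℝ)⁻¹)^6) * ((n.choose k : ℝ) * p^k * (1-p)^(n-k) *
            ((k:ℝ) - (n:ℝ)*p)^6) := by
      intro k hk
      have hkn : k ≤ n := by have := Finset.mem_range.1 hk; omega
      have hx0 : (0:ℝ) ≤ (k:ℝ)/n := by positivity
      have hx1 : (k:ℝ)/n ≤ 1 := by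
        rw [div_le_one hnpos]; exact_mod_cast hkn
      have h1x : ((n:ℝ)-k)/n = 1 - (k:ℝ)/n := by field_simp
      have hpt := pointwiseX p hp0 hp1 ((k:ℝ)/n) hx0 hx1
      rw [h1x]
      have hfac : (n.choose k : ℝ) * p^k * (1-p)^(n-k) *
            (-((k:ℝ)/n) * Real.log ((k:ℝ)/n) - (1 - (k:ℝ)/n) * Real.log (1 - (k:ℝ)/n))
          - (n.choose k : ℝ) * p^k * (1-p)^(n-k) * Gfun p ((k:ℝ)/n - p)
          = ((n.choose k : ℝ) * p^k * (1-p)^(n-k)) *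
            ((-((k:ℝ)/n) * Real.log ((k:ℝ)/n) - (1 - (k:ℝ)/n) * Real.log (1 - (k:ℝ)/n))
              - Gfun p ((k:ℝ)/n - p)) := by ring
      rw [hfac, abs_mul, abs_of_nonneg (hW0 k)]
      have hb : |(-((k:ℝ)/n) * Real.log ((k:ℝ)/n) - (1 - (k:ℝ)/n) * Real.log (1 - (k:ℝ)/n))
          - Gfun p ((k:ℝ)/n - p)| ≤ Lam p * ((k:ℝ)/n - p)^6 := hpt
      have hueq : ((k:ℝ)/n - p)^6 = (((k:ℝ) - (n:ℝ)*p))^6 * ((n:ℝ)⁻¹)^6 := by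
        rw [show (k:ℝ)/n - p = ((k:ℝ) - (n:ℝ)*p) * ((n:ℝ)⁻¹) by field_simp]
        ring
      calc ((n.choose k : ℝ) * p^k * (1-p)^(n-k)) *
            |(-((k:ℝ)/n) * Real.log ((k:ℝ)/n) - (1 - (k:ℝ)/n) * Real.log (1 - (k:ℝ)/n))
              - Gfun p ((k:ℝ)/n - p)|
          ≤ ((n.choose k : ℝ) * p^k * (1-p)^(n-k)) * (Lam p * ((k:ℝ)/n - p)^6) :=
            mul_le_mul_of_nonneg_left hb (hW0 k)
        _ = (Lam p * ((n:ℝ)⁻¹)^6) * ((n.choose k : ℝ) * p^k * (1-p)^(n-k) *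
              ((k:ℝ) - (n:ℝ)*p)^6) := by rw [hueq]; ring
    calc |∑ k ∈ Finset.range (n+1), ((n.choose k : ℝ) * p^k * (1-p)^(n-k) *
          (-((k:ℝ)/n) * Real.log ((k:ℝ)/n) - (((n:ℝ)-k)/n) * Real.log (((n:ℝ)-k)/n))
        - (n.choose k : ℝ) * p^k * (1-p)^(n-k) * Gfun p ((k:ℝ)/n - p))|
        ≤ ∑ k ∈ Finset.range (n+1), |(n.choose k : ℝ) * p^k * (1-p)^(n-k) *
          (-((k:ℝ)/n) * Real.log ((k:ℝ)/n) - (((n:ℝ)-k)/n) * Real.log (((n:ℝ)-k)/n))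
        - (n.choose k : ℝ) * p^k * (1-p)^(n-k) * Gfun p ((k:ℝ)/n - p)| :=
          Finset.abs_sum_le_sum_abs _ _
      _ ≤ ∑ k ∈ Finset.range (n+1), (Lam p * ((n:ℝ)⁻¹)^6) *
            ((n.choose k : ℝ) * p^k * (1-p)^(n-k) * ((k:ℝ) - (n:ℝ)*p)^6) :=
          Finset.sum_le_sum hterm
      _ = (Lam p * ((n:ℝ)⁻¹)^6) * ∑ k ∈ Finset.range (n+1),
            ((n.choose k : ℝ) * p^k * (1-p)^(n-k) * ((k:ℝ) - (n:ℝ)*p)^6) :=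
          (Finset.mul_sum _ _ _).symm
      _ = (Lam p * ((n:ℝ)⁻¹)^6) * (15*(n:ℝ)^3*(p*(1-p))^3
            + (n:ℝ)^2*(p*(1-p))^2*(25-130*(p*(1-p)))
            + (n:ℝ)*(p*(1-p))*(1-30*(p*(1-p))+120*(p*(1-p))^2)) := by rw [cm6]
      _ ≤ Lam p * (A6 / (n:ℝ)^3) := by
          rw [hA6]
          have hmu : 15*(n:ℝ)^3*(p*(1-p))^3 + (n:ℝ)^2*(p*(1-p))^2*(25-130*(p*(1-p)))
              + (n:ℝ)*(p*(1-p))*(1-30*(p*(1-p))+120*(p*(1-p))^2)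
              ≤ (15*(p*(1-p))^3 + |(p*(1-p))^2*(25-130*(p*(1-p)))|
                + |(p*(1-p))*(1-30*(p*(1-p))+120*(p*(1-p))^2)|) * (n:ℝ)^3 := by
            have b2 : (n:ℝ)^2 ≤ (n:ℝ)^3 := by nlinarith
            have b1 : (n:ℝ) ≤ (n:ℝ)^3 := by nlinarith
            have a2 : (n:ℝ)^2*(p*(1-p))^2*(25-130*(p*(1-p)))
                ≤ |(p*(1-p))^2*(25-130*(p*(1-p)))| * (n:ℝ)^3 := by
              calc (n:ℝ)^2*(p*(1-p))^2*(25-130*(p*(1-p)))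
                  ≤ (n:ℝ)^2 * |(p*(1-p))^2*(25-130*(p*(1-p)))| := by
                    rw [mul_assoc]
                    apply mul_le_mul_of_nonneg_left (le_abs_self _) (by positivity)
                _ ≤ (n:ℝ)^3 * |(p*(1-p))^2*(25-130*(p*(1-p)))| :=
                    mul_le_mul_of_nonneg_right b2 (abs_nonneg _)
                _ = |(p*(1-p))^2*(25-130*(p*(1-p)))| * (n:ℝ)^3 := by ring
            have a1 : (n:ℝ)*((p*(1-p))*(1-30*(p*(1-p))+120*(p*(1-p))^2))
                ≤ |(p*(1-p))*(1-30*(p*(1-p))+120*(p*(1-p))^2)| * (n:ℝ)^3 := by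
              calc (n:ℝ)*((p*(1-p))*(1-30*(p*(1-p))+120*(p*(1-p))^2))
                  ≤ (n:ℝ) * |(p*(1-p))*(1-30*(p*(1-p))+120*(p*(1-p))^2)| :=
                    mul_le_mul_of_nonneg_left (le_abs_self _) (by positivity)
                _ ≤ (n:ℝ)^3 * |(p*(1-p))*(1-30*(p*(1-p))+120*(p*(1-p))^2)| :=
                    mul_le_mul_of_nonneg_right b1 (abs_nonneg _)
                _ = |(p*(1-p))*(1-30*(p*(1-p))+120*(p*(1-p))^2)| * (n:ℝ)^3 := by ring
            nlinarith [a2, a1]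
          calc (Lam p * ((n:ℝ)⁻¹)^6) * (15*(n:ℝ)^3*(p*(1-p))^3
                + (n:ℝ)^2*(p*(1-p))^2*(25-130*(p*(1-p)))
                + (n:ℝ)*(p*(1-p))*(1-30*(p*(1-p))+120*(p*(1-p))^2))
              ≤ (Lam p * ((n:ℝ)⁻¹)^6) * ((15*(p*(1-p))^3 + |(p*(1-p))^2*(25-130*(p*(1-p)))|
                + |(p*(1-p))*(1-30*(p*(1-p))+120*(p*(1-p))^2)|) * (n:ℝ)^3) := by
                apply mul_le_mul_of_nonneg_left hmu (by positivity)
            _ = Lam p * ((15*(p*(1-p))^3 + |(p*(1-p))^2*(25-130*(p*(1-p)))|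
                + |(p*(1-p))*(1-30*(p*(1-p))+120*(p*(1-p))^2)|) / (n:ℝ)^3) := by
                field_simp
  -- Step 4: the main-term identity
  have hA : (∑ k ∈ Finset.range (n+1), (n.choose k : ℝ) * p^k * (1-p)^(n-k) *
        Gfun p ((k:ℝ)/n - p)) - Hent p + 1 / (2 * (n:ℝ))
        - (p * (1-p) - 1) / (12 * p * (1-p) * (n:ℝ)^2)
      = (ee1 + ee2/(n:ℝ))/(n:ℝ)^3 := by
    rw [hSG, hee1, hee2]
    simp only [c2, c3, c4, c5]
    field_simp
    ring
  -- Step 5: combine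
  have hsplit : (∑ k ∈ Finset.range (n+1), (n.choose k : ℝ) * p^k * (1-p)^(n-k) *
          (-((k:ℝ)/n) * Real.log ((k:ℝ)/n) - (((n:ℝ)-k)/n) * Real.log (((n:ℝ)-k)/n)))
        - Hent p + 1 / (2 * (n:ℝ)) - (p * (1-p) - 1) / (12 * p * (1-p) * (n:ℝ)^2)
      = ((∑ k ∈ Finset.range (n+1), (n.choose k : ℝ) * p^k * (1-p)^(n-k) *
          Gfun p ((k:ℝ)/n - p)) - Hent p + 1 / (2 * (n:ℝ))
          - (p * (1-p) - 1) / (12 * p * (1-p) * (n:ℝ)^2))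
        + ((∑ k ∈ Finset.range (n+1), (n.choose k : ℝ) * p^k * (1-p)^(n-k) *
          (-((k:ℝ)/n) * Real.log ((k:ℝ)/n) - (((n:ℝ)-k)/n) * Real.log (((n:ℝ)-k)/n)))
          - (∑ k ∈ Finset.range (n+1), (n.choose k : ℝ) * p^k * (1-p)^(n-k) *
          Gfun p ((k:ℝ)/n - p))) := by ring
  rw [hsplit]
  have habsA : |((∑ k ∈ Finset.range (n+1), (n.choose k : ℝ) * p^k * (1-p)^(n-k) *
          Gfun p ((k:ℝ)/n - p)) - Hent p + 1 / (2 * (n:ℝ))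
          - (p * (1-p) - 1) / (12 * p * (1-p) * (n:ℝ)^2))| ≤ (|ee1| + |ee2|)/(n:ℝ)^3 := by
    rw [hA, abs_div, abs_of_pos (by positivity : (0:ℝ) < (n:ℝ)^3)]
    apply div_le_div_of_nonneg_right ?_ (by positivity)
    calc |ee1 + ee2/(n:ℝ)| ≤ |ee1| + |ee2/(n:ℝ)| := abs_add_le _ _
      _ = |ee1| + |ee2|/(n:ℝ) := by rw [abs_div, abs_of_pos hnpos]
      _ ≤ |ee1| + |ee2| := by
          have : |ee2|/(n:ℝ) ≤ |ee2| := by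
            apply div_le_self (abs_nonneg _) hn1
          linarith
  refine le_trans (abs_add_le _ _) ?_
  have hfinal : (|ee1| + |ee2|)/(n:ℝ)^3 + Lam p * (A6 / (n:ℝ)^3)
      ≤ (|ee1| + |ee2| + Lam p * A6 + 1) / (n:ℝ)^3 := by
    have h1 : Lam p * (A6 / (n:ℝ)^3) = (Lam p * A6) / (n:ℝ)^3 := by ring
    rw [h1, ← add_div]
    apply div_le_div_of_nonneg_right ?_ (by positivity)
    linarith
  exact le_trans (add_le_add habsA herr) hfinal

end
end
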